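/- arXiv:2206.14958 — 5 statements merged into one kernel-verified Lean document; each statement's English description precedes it below -/
import Mathlib

section
/- Let N ≥ 5 be an integer and let δ be a constant with 0 < δ < N−2. Then there is a constant C > 0 (depending only on N and δ) such that for all x ∈ ℝ^N: ∫_{ℝ^N} |x−y|^{−(N−2)} (1+|y|)^{−(2+δ)} dy ≤ C (1+|x|)^{−δ}. -/
open MeasureTheory Real Set Metric
open scoped ENNReal

lemma rp_lintegral_smul {N : ℕ} (f : EuclideanSpace ℝ (Fin N) → ENNReal) {c : ℝ} (hc : c ≠ 0) :
    (∫⁻ x : EuclideanSpace ℝ (Fin N), f (c • x)) =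
      ENNReal.ofReal |((c ^ N)⁻¹)| * ∫⁻ x, f x := by
  calc ∫⁻ x : EuclideanSpace ℝ (Fin N), f (c • x)
      = ∫⁻ y, f y ∂(Measure.map (fun x : EuclideanSpace ℝ (Fin N) => c • x) volume) :=
        (lintegral_map_equiv f
          (Homeomorph.smul (isUnit_iff_ne_zero.2 hc).unit).toMeasurableEquiv).symm
    _ = _ := by
        rw [Measure.map_addHaar_smul volume hc, lintegral_smul_measure,
          finrank_euclideanSpace_fin, smul_eq_mul]

lemma rp_scale {N : ℕ} (s : ℝ) {r : ℝ} (hr : 0 < r) {S T : Set (EuclideanSpace ℝ (Fin N))}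
    (hS : MeasurableSet S) (hT : MeasurableSet T)
    (hmem : ∀ z : EuclideanSpace ℝ (Fin N), r • z ∈ S ↔ z ∈ T) :
    ∫⁻ z in S, ENNReal.ofReal (‖z‖ ^ (-s)) =
      ENNReal.ofReal (r ^ ((N : ℝ) - s)) * ∫⁻ z in T, ENNReal.ofReal (‖z‖ ^ (-s)) := by
  set g : EuclideanSpace ℝ (Fin N) → ENNReal := fun z => ENNReal.ofReal (‖z‖ ^ (-s)) with hg
  have hrN : (0 : ℝ) < r ^ N := pow_pos hr N
  have key := rp_lintegral_smul (S.indicator g) hr.ne'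
  have hpt : ∀ z : EuclideanSpace ℝ (Fin N), S.indicator g (r • z) =
      T.indicator (fun z => ENNReal.ofReal (r ^ (-s)) * g z) z := by
    intro z
    by_cases hz : z ∈ T
    · rw [Set.indicator_of_mem ((hmem z).2 hz), Set.indicator_of_mem hz, hg]
      simp only [norm_smul, Real.norm_eq_abs, abs_of_pos hr]
      rw [Real.mul_rpow hr.le (norm_nonneg z), ENNReal.ofReal_mul (Real.rpow_nonneg hr.le _)]
    · rw [Set.indicator_of_notMem (fun h => hz ((hmem z).1 h)), Set.indicator_of_notMem hz]
  have key2 : ENNReal.ofReal (r ^ (-s)) * ∫⁻ z in T, g z =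
      ENNReal.ofReal |((r ^ N)⁻¹)| * ∫⁻ z in S, g z := by
    rw [← lintegral_indicator hS, ← key]
    simp_rw [hpt]
    rw [lintegral_indicator hT, lintegral_const_mul' _ _ ENNReal.ofReal_ne_top]
  have habs : |((r ^ N)⁻¹)| = (r ^ N)⁻¹ := abs_of_pos (by positivity)
  calc ∫⁻ z in S, g z
      = (ENNReal.ofReal (r ^ N) * ENNReal.ofReal ((r ^ N)⁻¹)) * ∫⁻ z in S, g z := by
        rw [← ENNReal.ofReal_mul hrN.le, mul_inv_cancel₀ hrN.ne', ENNReal.ofReal_one, one_mul]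
    _ = ENNReal.ofReal (r ^ N) * (ENNReal.ofReal |((r ^ N)⁻¹)| * ∫⁻ z in S, g z) := by
        rw [habs, mul_assoc]
    _ = ENNReal.ofReal (r ^ N) * (ENNReal.ofReal (r ^ (-s)) * ∫⁻ z in T, g z) := by
        rw [← key2]
    _ = ENNReal.ofReal (r ^ ((N : ℝ) - s)) * ∫⁻ z in T, g z := by
        rw [← mul_assoc, ← ENNReal.ofReal_mul (by positivity), ← Real.rpow_natCast r N,
          ← Real.rpow_add hr, ← sub_eq_add_neg]

lemma rp_finite_ball {N : ℕ} {s : ℝ} (hs0 : 0 < s) (hs : s < N) :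
    ∫⁻ z in ball (0 : EuclideanSpace ℝ (Fin N)) 1, ENNReal.ofReal (‖z‖ ^ (-s)) < ∞ := by
  set μ := volume.restrict (ball (0 : EuclideanSpace ℝ (Fin N)) 1) with hμ
  have hmeas : Measurable fun z : EuclideanSpace ℝ (Fin N) => ‖z‖ ^ (-s) := by fun_prop
  rw [show (∫⁻ z in ball (0 : EuclideanSpace ℝ (Fin N)) 1, ENNReal.ofReal (‖z‖ ^ (-s))) =
      ∫⁻ z, ENNReal.ofReal (‖z‖ ^ (-s)) ∂μ from rfl,
    lintegral_eq_lintegral_meas_le μ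
      (Filter.Eventually.of_forall fun z => Real.rpow_nonneg (norm_nonneg z) _)
      hmeas.aemeasurable]
  have hsub : ∀ t : ℝ, 0 < t → {a : EuclideanSpace ℝ (Fin N) | t ≤ ‖a‖ ^ (-s)} ⊆
      closedBall 0 (t ^ (-s⁻¹)) := by
    intro t ht a ha
    simp only [mem_setOf_eq] at ha
    have ha0 : 0 < ‖a‖ := by
      rcases eq_or_lt_of_le (norm_nonneg a) with h | h
      · exfalso
        rw [← h, Real.zero_rpow (neg_ne_zero.2 hs0.ne')] at ha
        exact absurd (ht.trans_le ha) (lt_irrefl 0)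
      · exact h
    rw [mem_closedBall_zero_iff]
    calc ‖a‖ = (‖a‖ ^ (-s)) ^ (-s⁻¹) := by
          rw [← Real.rpow_mul (norm_nonneg a), neg_mul_neg, mul_inv_cancel₀ hs0.ne',
            Real.rpow_one]
      _ ≤ t ^ (-s⁻¹) := Real.rpow_le_rpow_of_nonpos ht ha (neg_nonpos.2 (inv_nonneg.2 hs0.le))
  calc ∫⁻ t in Ioi (0:ℝ), μ {a | t ≤ ‖a‖ ^ (-s)}
      ≤ ∫⁻ t in Ioc (0:ℝ) 1 ∪ Ioi 1, μ {a | t ≤ ‖a‖ ^ (-s)} :=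
        lintegral_mono_set Ioi_subset_Ioc_union_Ioi
    _ ≤ (∫⁻ t in Ioc (0:ℝ) 1, μ {a | t ≤ ‖a‖ ^ (-s)}) +
        ∫⁻ t in Ioi (1:ℝ), μ {a | t ≤ ‖a‖ ^ (-s)} := lintegral_union_le _ _ _
    _ < ∞ := by
        refine ENNReal.add_lt_top.2 ⟨?_, ?_⟩
        · calc (∫⁻ t in Ioc (0:ℝ) 1, μ {a | t ≤ ‖a‖ ^ (-s)})
              ≤ ∫⁻ _ in Ioc (0:ℝ) 1, volume (ball (0 : EuclideanSpace ℝ (Fin N)) 1) := by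
                refine setLIntegral_mono' measurableSet_Ioc fun t _ => ?_
                calc μ {a | t ≤ ‖a‖ ^ (-s)} ≤ μ univ := measure_mono (subset_univ _)
                  _ = volume (ball (0 : EuclideanSpace ℝ (Fin N)) 1) := by
                      rw [hμ, Measure.restrict_apply_univ]
            _ = volume (ball (0 : EuclideanSpace ℝ (Fin N)) 1) * volume (Ioc (0:ℝ) 1) :=
                setLIntegral_const _ _
            _ < ∞ := ENNReal.mul_lt_top measure_ball_lt_top (by simp)
        · have hp : -s⁻¹ * N < -1 := by
            rw [neg_mul, neg_lt_neg_iff]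
            rw [inv_mul_eq_div, lt_div_iff₀ hs0]
            linarith
          calc (∫⁻ t in Ioi (1:ℝ), μ {a | t ≤ ‖a‖ ^ (-s)})
              ≤ ∫⁻ t in Ioi (1:ℝ), ENNReal.ofReal (t ^ (-s⁻¹ * N)) *
                  volume (closedBall (0 : EuclideanSpace ℝ (Fin N)) 1) := by
                refine setLIntegral_mono' measurableSet_Ioi fun t ht => ?_
                have ht0 : (0:ℝ) < t := lt_trans one_pos ht
                calc μ {a | t ≤ ‖a‖ ^ (-s)}
                    ≤ μ (closedBall 0 (t ^ (-s⁻¹))) := measure_mono (hsub t ht0)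
                  _ ≤ volume (closedBall (0 : EuclideanSpace ℝ (Fin N)) (t ^ (-s⁻¹))) :=
                      Measure.restrict_le_self _
                  _ = ENNReal.ofReal ((t ^ (-s⁻¹)) ^ N) *
                      volume (closedBall (0 : EuclideanSpace ℝ (Fin N)) 1) := by
                      rw [Measure.addHaar_closedBall' volume _ (Real.rpow_nonneg ht0.le _),
                        finrank_euclideanSpace_fin]
                  _ = ENNReal.ofReal (t ^ (-s⁻¹ * N)) *
                      volume (closedBall (0 : EuclideanSpace ℝ (Fin N)) 1) := by
                      rw [← Real.rpow_natCast (t ^ (-s⁻¹)) N, ← Real.rpow_mul ht0.le]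
            _ = (∫⁻ t in Ioi (1:ℝ), ENNReal.ofReal (t ^ (-s⁻¹ * N))) *
                volume (closedBall (0 : EuclideanSpace ℝ (Fin N)) 1) :=
                lintegral_mul_const' _ _ measure_closedBall_lt_top.ne
            _ < ∞ := ENNReal.mul_lt_top
                ((integrableOn_Ioi_rpow_of_lt hp one_pos).setLIntegral_lt_top)
                measure_closedBall_lt_top

lemma rp_finite_compl {N : ℕ} {s : ℝ} (hs : (N : ℝ) < s) :
    ∫⁻ z in (ball (0 : EuclideanSpace ℝ (Fin N)) 1)ᶜ, ENNReal.ofReal (‖z‖ ^ (-s)) < ∞ := by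
  have hs0 : (0:ℝ) < s := lt_of_le_of_lt (Nat.cast_nonneg N) hs
  calc ∫⁻ z in (ball (0 : EuclideanSpace ℝ (Fin N)) 1)ᶜ, ENNReal.ofReal (‖z‖ ^ (-s))
      ≤ ∫⁻ z in (ball (0 : EuclideanSpace ℝ (Fin N)) 1)ᶜ,
          ENNReal.ofReal ((2:ℝ) ^ s) * ENNReal.ofReal ((1 + ‖z‖) ^ (-s)) := by
        refine setLIntegral_mono' (measurableSet_ball.compl) fun z hz => ?_
        have h1 : (1:ℝ) ≤ ‖z‖ := by
          simpa [mem_ball, dist_eq_norm] using hz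
        have hpos : (0:ℝ) < (1 + ‖z‖) / 2 := by linarith
        have hle : (1 + ‖z‖) / 2 ≤ ‖z‖ := by linarith
        have key : ‖z‖ ^ (-s) ≤ (2:ℝ) ^ s * (1 + ‖z‖) ^ (-s) := by
          calc ‖z‖ ^ (-s) ≤ ((1 + ‖z‖) / 2) ^ (-s) :=
                Real.rpow_le_rpow_of_nonpos hpos hle (neg_nonpos.2 hs0.le)
            _ = (2:ℝ) ^ s * (1 + ‖z‖) ^ (-s) := by
                rw [Real.div_rpow (by linarith) (by norm_num),
                  Real.rpow_neg (by norm_num : (0:ℝ) ≤ 2)]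
                field_simp
        rw [← ENNReal.ofReal_mul (by positivity)]
        exact ENNReal.ofReal_le_ofReal key
    _ ≤ ∫⁻ z : EuclideanSpace ℝ (Fin N),
          ENNReal.ofReal ((2:ℝ) ^ s) * ENNReal.ofReal ((1 + ‖z‖) ^ (-s)) :=
        setLIntegral_le_lintegral _ _
    _ = ENNReal.ofReal ((2:ℝ) ^ s) *
        ∫⁻ z : EuclideanSpace ℝ (Fin N), ENNReal.ofReal ((1 + ‖z‖) ^ (-s)) :=
        lintegral_const_mul' _ _ ENNReal.ofReal_ne_top
    _ < ∞ := ENNReal.mul_lt_top ENNReal.ofReal_lt_top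
        (finite_integral_one_add_norm (by rwa [finrank_euclideanSpace_fin]))


/-- **Decay estimate for the Riesz potential of order 2.**  For `N ≥ 5` and `0 < δ < N - 2`
there is a constant `C > 0` such that for all `x ∈ ℝᴺ`,
`∫ |x-y|^(-(N-2)) (1+|y|)^(-(2+δ)) dy ≤ C (1+|x|)^(-δ)`. -/
theorem riesz_potential_decay (N : ℕ) (hN : 5 ≤ N) (δ : ℝ)
    (hδ0 : 0 < δ) (hδ : δ < (N : ℝ) - 2) :
    ∃ C : ℝ, 0 < C ∧ ∀ x : EuclideanSpace ℝ (Fin N),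
      ∫⁻ y : EuclideanSpace ℝ (Fin N),
          ENNReal.ofReal (‖x - y‖ ^ (-((N : ℝ) - 2)) * (1 + ‖y‖) ^ (-(2 + δ))) ≤
        ENNReal.ofReal (C * (1 + ‖x‖) ^ (-δ)) := by
  have hN5 : (5:ℝ) ≤ (N:ℝ) := by exact_mod_cast hN
  have hN2 : (0:ℝ) < (N:ℝ) - 2 := by linarith
  have h2δ : (0:ℝ) < 2 + δ := by linarith
  have h2δN : 2 + δ < (N:ℝ) := by linarith
  set K1 := ∫⁻ z in ball (0 : EuclideanSpace ℝ (Fin N)) 1,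
    ENNReal.ofReal (‖z‖ ^ (-((N:ℝ) - 2))) with hK1def
  set K2 := ∫⁻ z in ball (0 : EuclideanSpace ℝ (Fin N)) 1,
    ENNReal.ofReal (‖z‖ ^ (-(2 + δ))) with hK2def
  set K3 := ∫⁻ z in (ball (0 : EuclideanSpace ℝ (Fin N)) 1)ᶜ,
    ENNReal.ofReal (‖z‖ ^ (-((N:ℝ) + δ))) with hK3def
  have hK1 : K1 < ∞ := rp_finite_ball hN2 (by linarith)
  have hK2 : K2 < ∞ := rp_finite_ball h2δ h2δN
  have hK3 : K3 < ∞ := rp_finite_compl (by linarith)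
  set cA : ℝ := (2:ℝ) ^ δ with hcAdef
  set cB : ℝ := (2:ℝ) ^ (((N:ℝ) - 2) + ((N:ℝ) - (2 + δ))) with hcBdef
  set cC : ℝ := (2:ℝ) ^ (((N:ℝ) - 2) + (-δ)) with hcCdef
  have hcA : 0 ≤ cA := Real.rpow_nonneg (by norm_num) _
  have hcB : 0 ≤ cB := Real.rpow_nonneg (by norm_num) _
  have hcC : 0 ≤ cC := Real.rpow_nonneg (by norm_num) _
  set S : ℝ≥0∞ := ENNReal.ofReal cA * K1 + ENNReal.ofReal cB * K2 + ENNReal.ofReal cC * K3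
    with hSdef
  have hS : S ≠ ∞ := by
    simp only [hSdef, Ne, ENNReal.add_eq_top, not_or]
    exact ⟨⟨(ENNReal.mul_lt_top ENNReal.ofReal_lt_top hK1).ne,
      (ENNReal.mul_lt_top ENNReal.ofReal_lt_top hK2).ne⟩,
      (ENNReal.mul_lt_top ENNReal.ofReal_lt_top hK3).ne⟩
  refine ⟨S.toReal + 1, by positivity, fun x => ?_⟩
  set R : ℝ := 1 + ‖x‖ with hRdef
  have hR1 : 1 ≤ R := by simp [hRdef, norm_nonneg]
  have hR0 : 0 < R := lt_of_lt_of_le one_pos hR1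
  have ht : 0 < R / 2 := by linarith
  have h2R0 : 0 < 2 * R := by linarith
  set g : EuclideanSpace ℝ (Fin N) → ℝ≥0∞ :=
    fun y => ENNReal.ofReal (‖x - y‖ ^ (-((N : ℝ) - 2)) * (1 + ‖y‖) ^ (-(2 + δ))) with hgdef
  set A := ball x (R / 2) with hAdef
  set B := ball (0 : EuclideanSpace ℝ (Fin N)) (2 * R) \ A with hBdef
  set Cs := (ball (0 : EuclideanSpace ℝ (Fin N)) (2 * R))ᶜ with hCsdef
  -- helpers for rpow arithmetic
  have hRp : ∀ p q : ℝ, R ^ p * R ^ q = R ^ (p + q) := fun p q => (Real.rpow_add hR0 p q).symm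
  have h2p : ∀ p q : ℝ, (2:ℝ) ^ p * 2 ^ q = 2 ^ (p + q) := fun p q =>
    (Real.rpow_add two_pos p q).symm
  have hhalf : ∀ p : ℝ, (R / 2) ^ p = 2 ^ (-p) * R ^ p := fun p => by
    rw [div_eq_mul_inv, Real.mul_rpow hR0.le (by positivity),
      Real.inv_rpow (by norm_num : (0:ℝ) ≤ 2), ← Real.rpow_neg (by norm_num : (0:ℝ) ≤ 2),
      mul_comm]
  have h2Rp : ∀ p : ℝ, (2 * R) ^ p = 2 ^ p * R ^ p := fun p =>
    Real.mul_rpow (by norm_num) hR0.le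
  -- Region A
  have boundA : ∫⁻ y in A, g y ≤ ENNReal.ofReal (cA * R ^ (-δ)) * K1 := by
    have step1 : ∫⁻ y in A, g y ≤ ENNReal.ofReal ((R/2) ^ (-(2+δ))) *
        ∫⁻ y in A, ENNReal.ofReal (‖x - y‖ ^ (-((N:ℝ) - 2))) := by
      rw [← lintegral_const_mul' _ _ ENNReal.ofReal_ne_top]
      refine setLIntegral_mono' measurableSet_ball fun y hy => ?_
      have h2 : ‖x - y‖ < R / 2 := by
        rw [← dist_eq_norm]; exact mem_ball'.1 hy
      have h1 : R / 2 ≤ 1 + ‖y‖ := by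
        have h3 := norm_sub_norm_le x y
        rw [hRdef] at *
        linarith
      have hw : (1 + ‖y‖) ^ (-(2+δ)) ≤ (R/2) ^ (-(2+δ)) :=
        Real.rpow_le_rpow_of_nonpos ht h1 (by linarith)
      rw [hgdef, ← ENNReal.ofReal_mul (Real.rpow_nonneg ht.le _)]
      refine ENNReal.ofReal_le_ofReal ?_
      calc ‖x - y‖ ^ (-((N:ℝ) - 2)) * (1 + ‖y‖) ^ (-(2+δ))
          ≤ ‖x - y‖ ^ (-((N:ℝ) - 2)) * (R/2) ^ (-(2+δ)) :=
            mul_le_mul_of_nonneg_left hw (Real.rpow_nonneg (norm_nonneg _) _)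
        _ = (R/2) ^ (-(2+δ)) * ‖x - y‖ ^ (-((N:ℝ) - 2)) := mul_comm _ _
    have step2 : ∫⁻ y in A, ENNReal.ofReal (‖x - y‖ ^ (-((N:ℝ) - 2))) =
        ∫⁻ z in ball (0 : EuclideanSpace ℝ (Fin N)) (R/2),
          ENNReal.ofReal (‖z‖ ^ (-((N:ℝ) - 2))) := by
      set F := (ball (0 : EuclideanSpace ℝ (Fin N)) (R/2)).indicator
        (fun z => ENNReal.ofReal (‖z‖ ^ (-((N:ℝ) - 2)))) with hFdef
      have hF : Measurable F := Measurable.indicator (by fun_prop) measurableSet_ball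
      have hpt : ∀ y : EuclideanSpace ℝ (Fin N),
          A.indicator (fun y => ENNReal.ofReal (‖x - y‖ ^ (-((N:ℝ) - 2)))) y = F (x - y) := by
        intro y
        have hmemiff : y ∈ A ↔ x - y ∈ ball (0 : EuclideanSpace ℝ (Fin N)) (R/2) := by
          rw [hAdef, mem_ball_zero_iff, mem_ball', dist_eq_norm]
        by_cases hy : y ∈ A
        · rw [Set.indicator_of_mem hy, hFdef, Set.indicator_of_mem (hmemiff.1 hy)]
        · rw [Set.indicator_of_notMem hy, hFdef,
            Set.indicator_of_notMem (fun h => hy (hmemiff.2 h))]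
      calc ∫⁻ y in A, ENNReal.ofReal (‖x - y‖ ^ (-((N:ℝ) - 2)))
          = ∫⁻ y, A.indicator (fun y => ENNReal.ofReal (‖x - y‖ ^ (-((N:ℝ) - 2)))) y :=
            (lintegral_indicator measurableSet_ball _).symm
        _ = ∫⁻ y, F (x - y) := by simp_rw [hpt]
        _ = ∫⁻ z, F z := (Measure.measurePreserving_sub_left volume x).lintegral_comp hF
        _ = _ := lintegral_indicator measurableSet_ball _
    have step3 : ∫⁻ z in ball (0 : EuclideanSpace ℝ (Fin N)) (R/2),
        ENNReal.ofReal (‖z‖ ^ (-((N:ℝ) - 2))) =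
        ENNReal.ofReal ((R/2) ^ ((N:ℝ) - ((N:ℝ) - 2))) * K1 := by
      refine rp_scale _ ht measurableSet_ball measurableSet_ball fun z => ?_
      rw [mem_ball_zero_iff, mem_ball_zero_iff, norm_smul, Real.norm_eq_abs, abs_of_pos ht]
      exact mul_lt_iff_lt_one_right ht
    have harith : (R/2) ^ (-(2+δ)) * (R/2) ^ ((N:ℝ) - ((N:ℝ) - 2)) = cA * R ^ (-δ) := by
      rw [show (N:ℝ) - ((N:ℝ) - 2) = 2 by ring, hhalf, hhalf, mul_mul_mul_comm, h2p, hRp,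
        neg_neg, show (2+δ) + -2 = δ by ring, show -(2+δ) + 2 = -δ by ring, hcAdef]
    calc ∫⁻ y in A, g y
        ≤ ENNReal.ofReal ((R/2) ^ (-(2+δ))) *
          (ENNReal.ofReal ((R/2) ^ ((N:ℝ) - ((N:ℝ) - 2))) * K1) := by
          rw [← step3, ← step2]; exact step1
      _ = ENNReal.ofReal (cA * R ^ (-δ)) * K1 := by
          rw [← mul_assoc, ← ENNReal.ofReal_mul (Real.rpow_nonneg ht.le _), harith]
  -- Region B
  have boundB : ∫⁻ y in B, g y ≤ ENNReal.ofReal (cB * R ^ (-δ)) * K2 := by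
    have hBmeas : MeasurableSet B := measurableSet_ball.diff measurableSet_ball
    haveI : Nonempty (Fin N) := ⟨⟨0, by omega⟩⟩
    have h0 : ∀ᵐ y : EuclideanSpace ℝ (Fin N) ∂volume, y ≠ 0 := by
      refine ae_iff.2 ?_
      simp only [not_not, Set.setOf_eq_eq_singleton]
      exact measure_singleton 0
    have step1 : ∫⁻ y in B, g y ≤ ENNReal.ofReal ((R/2) ^ (-((N:ℝ) - 2))) *
        ∫⁻ y in B, ENNReal.ofReal (‖y‖ ^ (-(2+δ))) := by
      rw [← lintegral_const_mul' _ _ ENNReal.ofReal_ne_top]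
      refine setLIntegral_mono_ae' hBmeas ?_
      filter_upwards [h0] with y hy0 hyB
      have hge : R / 2 ≤ ‖x - y‖ := by
        have h4 := hyB.2
        simp only [hAdef, mem_ball', dist_eq_norm, not_lt] at h4
        exact h4
      have hy0' : 0 < ‖y‖ := norm_pos_iff.2 hy0
      have hk : ‖x - y‖ ^ (-((N:ℝ) - 2)) ≤ (R/2) ^ (-((N:ℝ) - 2)) :=
        Real.rpow_le_rpow_of_nonpos ht hge (by linarith)
      have hw : (1 + ‖y‖) ^ (-(2+δ)) ≤ ‖y‖ ^ (-(2+δ)) :=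
        Real.rpow_le_rpow_of_nonpos hy0' (by linarith) (by linarith)
      rw [hgdef, ← ENNReal.ofReal_mul (Real.rpow_nonneg ht.le _)]
      refine ENNReal.ofReal_le_ofReal ?_
      exact mul_le_mul hk hw (Real.rpow_nonneg (by positivity) _) (Real.rpow_nonneg ht.le _)
    have step2 : ∫⁻ y in B, ENNReal.ofReal (‖y‖ ^ (-(2+δ))) ≤
        ∫⁻ y in ball (0 : EuclideanSpace ℝ (Fin N)) (2*R),
          ENNReal.ofReal (‖y‖ ^ (-(2+δ))) :=
      lintegral_mono_set diff_subset
    have step3 : ∫⁻ y in ball (0 : EuclideanSpace ℝ (Fin N)) (2*R),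
        ENNReal.ofReal (‖y‖ ^ (-(2+δ))) =
        ENNReal.ofReal ((2*R) ^ ((N:ℝ) - (2+δ))) * K2 := by
      refine rp_scale _ h2R0 measurableSet_ball measurableSet_ball fun z => ?_
      rw [mem_ball_zero_iff, mem_ball_zero_iff, norm_smul, Real.norm_eq_abs, abs_of_pos h2R0]
      exact mul_lt_iff_lt_one_right h2R0
    have harith : (R/2) ^ (-((N:ℝ) - 2)) * (2*R) ^ ((N:ℝ) - (2+δ)) = cB * R ^ (-δ) := by
      rw [hhalf, h2Rp, mul_mul_mul_comm, h2p, hRp, neg_neg, hcBdef,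
        show -((N:ℝ) - 2) + ((N:ℝ) - (2+δ)) = -δ by ring]
    calc ∫⁻ y in B, g y
        ≤ ENNReal.ofReal ((R/2) ^ (-((N:ℝ) - 2))) *
          (ENNReal.ofReal ((2*R) ^ ((N:ℝ) - (2+δ))) * K2) := by
          rw [← step3]
          exact le_trans step1 (mul_le_mul_right step2 _)
      _ = ENNReal.ofReal (cB * R ^ (-δ)) * K2 := by
          rw [← mul_assoc, ← ENNReal.ofReal_mul (Real.rpow_nonneg ht.le _), harith]
  -- Region C
  have boundC : ∫⁻ y in Cs, g y ≤ ENNReal.ofReal (cC * R ^ (-δ)) * K3 := by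
    have step1 : ∫⁻ y in Cs, g y ≤ ENNReal.ofReal ((2:ℝ) ^ ((N:ℝ) - 2)) *
        ∫⁻ y in Cs, ENNReal.ofReal (‖y‖ ^ (-((N:ℝ) + δ))) := by
      rw [← lintegral_const_mul' _ _ ENNReal.ofReal_ne_top]
      refine setLIntegral_mono' measurableSet_ball.compl fun y hy => ?_
      have hyR : 2 * R ≤ ‖y‖ := by
        simp only [hCsdef, mem_compl_iff, mem_ball_zero_iff, not_lt] at hy
        exact hy
      have hy0 : 0 < ‖y‖ := by linarith
      have hxy : ‖y‖ / 2 ≤ ‖x - y‖ := by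
        have h5 : ‖y‖ - ‖x‖ ≤ ‖y - x‖ := norm_sub_norm_le y x
        rw [norm_sub_rev] at h5
        have h6 : ‖x‖ = R - 1 := by rw [hRdef]; ring
        linarith
      have hk : ‖x - y‖ ^ (-((N:ℝ) - 2)) ≤ (‖y‖/2) ^ (-((N:ℝ) - 2)) :=
        Real.rpow_le_rpow_of_nonpos (by linarith) hxy (by linarith)
      have hsplit : (‖y‖/2) ^ (-((N:ℝ) - 2)) = 2 ^ ((N:ℝ) - 2) * ‖y‖ ^ (-((N:ℝ) - 2)) := by
        rw [div_eq_mul_inv, Real.mul_rpow (norm_nonneg y) (by positivity),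
          Real.inv_rpow (by norm_num : (0:ℝ) ≤ 2), ← Real.rpow_neg (by norm_num : (0:ℝ) ≤ 2),
          neg_neg, mul_comm]
      have hw : (1 + ‖y‖) ^ (-(2+δ)) ≤ ‖y‖ ^ (-(2+δ)) :=
        Real.rpow_le_rpow_of_nonpos hy0 (by linarith) (by linarith)
      rw [hgdef, ← ENNReal.ofReal_mul (Real.rpow_nonneg (by norm_num) _)]
      refine ENNReal.ofReal_le_ofReal ?_
      calc ‖x - y‖ ^ (-((N:ℝ) - 2)) * (1 + ‖y‖) ^ (-(2+δ))
          ≤ (‖y‖/2) ^ (-((N:ℝ) - 2)) * ‖y‖ ^ (-(2+δ)) :=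
            mul_le_mul hk hw (Real.rpow_nonneg (by positivity) _)
              (Real.rpow_nonneg (by positivity) _)
        _ = 2 ^ ((N:ℝ) - 2) * (‖y‖ ^ (-((N:ℝ) - 2)) * ‖y‖ ^ (-(2+δ))) := by
            rw [hsplit, mul_assoc]
        _ = 2 ^ ((N:ℝ) - 2) * ‖y‖ ^ (-((N:ℝ) + δ)) := by
            rw [← Real.rpow_add hy0, show -((N:ℝ) - 2) + -(2+δ) = -((N:ℝ) + δ) by ring]
    have step3 : ∫⁻ y in Cs, ENNReal.ofReal (‖y‖ ^ (-((N:ℝ) + δ))) =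
        ENNReal.ofReal ((2*R) ^ ((N:ℝ) - ((N:ℝ) + δ))) * K3 := by
      refine rp_scale _ h2R0 measurableSet_ball.compl measurableSet_ball.compl fun z => ?_
      rw [hCsdef, mem_compl_iff, mem_compl_iff, mem_ball_zero_iff, mem_ball_zero_iff,
        norm_smul, Real.norm_eq_abs, abs_of_pos h2R0]
      exact not_congr (mul_lt_iff_lt_one_right h2R0)
    have harith : (2:ℝ) ^ ((N:ℝ) - 2) * (2*R) ^ ((N:ℝ) - ((N:ℝ) + δ)) = cC * R ^ (-δ) := by
      rw [show (N:ℝ) - ((N:ℝ) + δ) = -δ by ring, h2Rp, ← mul_assoc, h2p, hcCdef]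
    calc ∫⁻ y in Cs, g y
        ≤ ENNReal.ofReal ((2:ℝ) ^ ((N:ℝ) - 2)) *
          (ENNReal.ofReal ((2*R) ^ ((N:ℝ) - ((N:ℝ) + δ))) * K3) := by
          rw [← step3]; exact step1
      _ = ENNReal.ofReal (cC * R ^ (-δ)) * K3 := by
          rw [← mul_assoc, ← ENNReal.ofReal_mul (Real.rpow_nonneg (by norm_num) _), harith]
  -- assemble
  have hcover : (univ : Set (EuclideanSpace ℝ (Fin N))) ⊆ A ∪ B ∪ Cs := by
    intro y _
    by_cases hA : y ∈ A
    · exact Or.inl (Or.inl hA)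
    · by_cases hC : y ∈ ball (0 : EuclideanSpace ℝ (Fin N)) (2*R)
      · exact Or.inl (Or.inr ⟨hC, hA⟩)
      · exact Or.inr hC
  have hRδ : (0:ℝ) ≤ R ^ (-δ) := Real.rpow_nonneg hR0.le _
  calc ∫⁻ y, g y = ∫⁻ y in univ, g y := by rw [Measure.restrict_univ]
    _ ≤ ∫⁻ y in A ∪ B ∪ Cs, g y := lintegral_mono_set hcover
    _ ≤ (∫⁻ y in A ∪ B, g y) + ∫⁻ y in Cs, g y := lintegral_union_le _ _ _
    _ ≤ ((∫⁻ y in A, g y) + ∫⁻ y in B, g y) + ∫⁻ y in Cs, g y :=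
        add_le_add_left (lintegral_union_le _ _ _) _
    _ ≤ (ENNReal.ofReal (cA * R ^ (-δ)) * K1 + ENNReal.ofReal (cB * R ^ (-δ)) * K2) +
        ENNReal.ofReal (cC * R ^ (-δ)) * K3 :=
        add_le_add (add_le_add boundA boundB) boundC
    _ = ENNReal.ofReal (R ^ (-δ)) * S := by
        rw [hSdef]
        rw [show cA * R ^ (-δ) = R ^ (-δ) * cA by ring, ENNReal.ofReal_mul hRδ,
          show cB * R ^ (-δ) = R ^ (-δ) * cB by ring, ENNReal.ofReal_mul hRδ,
          show cC * R ^ (-δ) = R ^ (-δ) * cC by ring, ENNReal.ofReal_mul hRδ]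
        ring
    _ = ENNReal.ofReal (R ^ (-δ) * S.toReal) := by
        conv_lhs => rw [← ENNReal.ofReal_toReal hS]
        rw [← ENNReal.ofReal_mul hRδ]
    _ ≤ ENNReal.ofReal ((S.toReal + 1) * R ^ (-δ)) := by
        refine ENNReal.ofReal_le_ofReal ?_
        rw [add_mul, one_mul, mul_comm]
        exact le_add_of_nonneg_right hRδ
end

section
/- Let η > 0. There exists a constant C > 0 (depending only on η) such that for all λ > 0, all z ∈ ℝ⁶ and all x ∈ ℝ⁶: ∫_{ℝ⁶} |x−y|^{−4} · λ² (1+λ|y−z|)^{−(6+η)} dy ≤ C (1+λ|x−z|)^{−4}. -/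
open MeasureTheory Real Metric Set
open scoped ENNReal NNReal

noncomputable section
abbrev E6 := EuclideanSpace ℝ (Fin 6)

lemma ball_riesz (x : E6) {R : ℝ} (hR : 0 < R) :
    ∫⁻ y in closedBall x R, ENNReal.ofReal (‖x - y‖ ^ (-(4:ℝ))) ≤
      ENNReal.ofReal (R ^ 2) * (32 * volume (ball (0:E6) 1)) := by
  set V := volume (ball (0:E6) 1) with hV
  set A : ℕ → Set E6 := fun n => {y | ‖x - y‖ ∈ Set.Ioc (R * (1/2)^(n+1)) (R * (1/2)^n)} with hA
  have hcont : Continuous fun y : E6 => ‖x - y‖ := (continuous_const.sub continuous_id).norm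
  have hAm : ∀ n, MeasurableSet (A n) := fun n =>
    hcont.measurable (measurableSet_Ioc)
  have hcover : closedBall x R ⊆ {x} ∪ ⋃ n, A n := by
    intro y hy
    rcases eq_or_ne y x with rfl | hyx
    · exact Or.inl rfl
    · right
      have hd : 0 < ‖x - y‖ := by
        rw [norm_pos_iff, sub_ne_zero]; exact fun h => hyx h.symm
      have hdR : ‖x - y‖ ≤ R := by
        rw [mem_closedBall, dist_eq_norm] at hy
        rwa [norm_sub_rev]
      have hex : ∃ n : ℕ, R * (1/2)^n < ‖x - y‖ := by
        obtain ⟨n, hn⟩ := exists_pow_lt_of_lt_one (div_pos hd hR) (by norm_num : (1/2:ℝ) < 1)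
        exact ⟨n, by rwa [lt_div_iff₀ hR, mul_comm] at hn⟩
      classical
      set n₀ := Nat.find hex with hn₀
      have hfind := Nat.find_spec hex
      have hne : n₀ ≠ 0 := by
        intro h
        have := hfind
        rw [← hn₀] at this
        rw [h] at this
        simp only [pow_zero, mul_one] at this
        exact absurd hdR (not_le.mpr this)
      obtain ⟨m, hm⟩ := Nat.exists_eq_succ_of_ne_zero hne
      have hub : ‖x - y‖ ≤ R * (1/2)^m := by
        have := Nat.find_min hex (by omega : m < n₀)
        exact not_lt.mp this
      refine mem_iUnion.mpr ⟨m, ?_⟩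
      constructor
      · have : R * (1/2)^(m+1) = R * (1/2)^n₀ := by rw [hm]
        rw [this]; exact hfind
      · exact hub
  calc ∫⁻ y in closedBall x R, ENNReal.ofReal (‖x - y‖ ^ (-(4:ℝ)))
      ≤ ∫⁻ y in {x} ∪ ⋃ n, A n, ENNReal.ofReal (‖x - y‖ ^ (-(4:ℝ))) :=
        lintegral_mono_set hcover
    _ ≤ (∫⁻ y in ({x} : Set E6), ENNReal.ofReal (‖x - y‖ ^ (-(4:ℝ)))) +
        ∫⁻ y in ⋃ n, A n, ENNReal.ofReal (‖x - y‖ ^ (-(4:ℝ))) := lintegral_union_le _ _ _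
    _ = ∫⁻ y in ⋃ n, A n, ENNReal.ofReal (‖x - y‖ ^ (-(4:ℝ))) := by
        rw [setLIntegral_measure_zero _ _ (measure_singleton x), zero_add]
    _ ≤ ∑' n, ∫⁻ y in A n, ENNReal.ofReal (‖x - y‖ ^ (-(4:ℝ))) := lintegral_iUnion_le _ _
    _ ≤ ∑' n, ENNReal.ofReal (R^2 * 16 * (4⁻¹)^n) * V := by
        refine ENNReal.tsum_le_tsum fun n => ?_
        have hb : 0 < R * (1/2:ℝ)^(n+1) := by positivity
        have h1 : ∫⁻ y in A n, ENNReal.ofReal (‖x - y‖ ^ (-(4:ℝ)))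
            ≤ ∫⁻ _ in A n, ENNReal.ofReal ((R * (1/2)^(n+1)) ^ (-(4:ℝ))) := by
          refine setLIntegral_mono' (hAm n) fun y hy => ?_
          exact ENNReal.ofReal_le_ofReal
            (rpow_le_rpow_of_nonpos hb hy.1.le (by norm_num))
        rw [setLIntegral_const] at h1
        have h2 : volume (A n) ≤ ENNReal.ofReal ((R * (1/2)^n)^6) * V := by
          have heq : volume (closedBall x (R * (1/2)^n))
              = ENNReal.ofReal ((R * (1/2)^n)^6) * V := by
            rw [Measure.addHaar_closedBall volume x (by positivity : (0:ℝ) ≤ R * (1/2)^n)]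
            norm_num
            rw [hV]
          rw [← heq]
          refine measure_mono fun y hy => ?_
          rw [mem_closedBall, dist_eq_norm, norm_sub_rev]
          exact hy.2
        calc ∫⁻ y in A n, ENNReal.ofReal (‖x - y‖ ^ (-(4:ℝ)))
            ≤ ENNReal.ofReal ((R * (1/2)^(n+1)) ^ (-(4:ℝ))) * (ENNReal.ofReal ((R * (1/2)^n)^6) * V) := by
              exact h1.trans (mul_le_mul_right h2 _)
          _ = ENNReal.ofReal ((R * (1/2)^(n+1)) ^ (-(4:ℝ)) * (R * (1/2)^n)^6) * V := by
              rw [ENNReal.ofReal_mul (rpow_nonneg hb.le _), mul_assoc]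
          _ = ENNReal.ofReal (R^2 * 16 * (4⁻¹)^n) * V := by
              congr 1
              rw [show (4⁻¹:ℝ) = (1/2)^2 by norm_num, ← pow_mul, mul_comm 2 n, pow_mul,
                rpow_neg hb.le, show ((4:ℝ)) = ((4:ℕ):ℝ) by norm_num, rpow_natCast, pow_succ]
              have ha : (0:ℝ) < (1/2:ℝ)^n := by positivity
              have ha' : ((1/2:ℝ)^n) ≠ 0 := ne_of_gt ha
              have hR' : R ≠ 0 := ne_of_gt hR
              congr 1
              field_simp
              ring
    _ ≤ ENNReal.ofReal (R ^ 2) * (32 * V) := by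
        rw [ENNReal.tsum_mul_right, ← mul_assoc]
        refine mul_le_mul' ?_ le_rfl
        have : ∑' n : ℕ, ENNReal.ofReal (R^2 * 16 * (4⁻¹)^n)
            = ENNReal.ofReal (R^2 * 16) * ∑' n : ℕ, ENNReal.ofReal ((4⁻¹)^n) := by
          rw [← ENNReal.tsum_mul_left]
          congr 1; ext n
          rw [← ENNReal.ofReal_mul (by positivity)]
        rw [this]
        have hsum : ∑' n : ℕ, ENNReal.ofReal ((4⁻¹:ℝ)^n) ≤ 2 := by
          have : ∀ n : ℕ, ENNReal.ofReal ((4⁻¹:ℝ)^n) ≤ (2⁻¹ : ℝ≥0∞)^n := by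
            intro n
            rw [ENNReal.ofReal_pow (by norm_num : (0:ℝ) ≤ 4⁻¹)]
            have h14 : ENNReal.ofReal (4⁻¹:ℝ) ≤ 2⁻¹ := by
              rw [show ((2:ℝ≥0∞))⁻¹ = ENNReal.ofReal (2⁻¹:ℝ) by
                rw [ENNReal.ofReal_inv_of_pos (by norm_num), ENNReal.ofReal_ofNat]]
              exact ENNReal.ofReal_le_ofReal (by norm_num)
            exact pow_le_pow_left' h14 n
          refine le_trans (ENNReal.tsum_le_tsum this) ?_
          rw [ENNReal.tsum_geometric]
          rw [ENNReal.one_sub_inv_two]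
          norm_num
        calc ENNReal.ofReal (R^2 * 16) * ∑' n : ℕ, ENNReal.ofReal ((4⁻¹:ℝ)^n)
            ≤ ENNReal.ofReal (R^2 * 16) * 2 := mul_le_mul' le_rfl hsum
          _ = ENNReal.ofReal (R^2) * 32 := by
              rw [ENNReal.ofReal_mul (by positivity), mul_assoc]
              norm_num


lemma tail_int (r : ℝ) {l : ℝ} (hl : 0 < l) (z : E6) :
    ∫⁻ y : E6, ENNReal.ofReal (l^6 * (1 + l * ‖y - z‖) ^ (-r)) =
      ∫⁻ u : E6, ENNReal.ofReal ((1 + ‖u‖) ^ (-r)) := by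
  have step1 : ∫⁻ y : E6, ENNReal.ofReal (l^6 * (1 + l * ‖y - z‖) ^ (-r)) =
      ∫⁻ v : E6, ENNReal.ofReal (l^6 * (1 + l * ‖v‖) ^ (-r)) := by
    have h := lintegral_add_right_eq_self (μ := (volume : Measure E6))
      (fun v : E6 => ENNReal.ofReal (l^6 * (1 + l * ‖v‖) ^ (-r))) (-z)
    simp only [← sub_eq_add_neg] at h
    exact h
  rw [step1]
  set F : E6 → ℝ≥0∞ := fun v => ENNReal.ofReal ((1 + l * ‖v‖) ^ (-r)) with hF
  have hFm : Measurable F := by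
    have hc : Continuous fun v : E6 => (1 + l * ‖v‖) ^ (-r) := by
      refine Continuous.rpow_const ?_ fun v => Or.inl ?_
      · fun_prop
      · positivity
    exact ENNReal.measurable_ofReal.comp hc.measurable
  have hmap := Measure.map_addHaar_smul (volume : Measure E6) (inv_ne_zero hl.ne')
  have habs : ENNReal.ofReal |(((l⁻¹:ℝ))^(Module.finrank ℝ E6))⁻¹| = ENNReal.ofReal (l^6) := by
    congr 1
    rw [show Module.finrank ℝ E6 = 6 by simp]
    rw [abs_of_pos (by positivity)]
    field_simp
  have key : ∫⁻ u : E6, F (l⁻¹ • u) = ENNReal.ofReal (l^6) * ∫⁻ v, F v := by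
    rw [← lintegral_map hFm (measurable_const_smul (l⁻¹ : ℝ)), hmap,
      lintegral_smul_measure, habs, smul_eq_mul]
  have hFval : ∀ u : E6, F (l⁻¹ • u) = ENNReal.ofReal ((1 + ‖u‖) ^ (-r)) := by
    intro u
    rw [hF]
    simp only [norm_smul, norm_inv, Real.norm_eq_abs, abs_of_pos hl]
    rw [← mul_assoc, mul_inv_cancel₀ hl.ne', one_mul]
  calc ∫⁻ v : E6, ENNReal.ofReal (l^6 * (1 + l * ‖v‖) ^ (-r))
      = ∫⁻ v : E6, ENNReal.ofReal (l^6) * F v := by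
        congr 1; ext v
        rw [hF, ENNReal.ofReal_mul (by positivity)]
    _ = ENNReal.ofReal (l^6) * ∫⁻ v, F v :=
        lintegral_const_mul' _ _ ENNReal.ofReal_ne_top
    _ = ∫⁻ u : E6, F (l⁻¹ • u) := key.symm
    _ = ∫⁻ u : E6, ENNReal.ofReal ((1 + ‖u‖) ^ (-r)) := by
        congr 1; ext u; exact hFval u


/-- **Convolution estimate on `ℝ⁶` for the Riesz kernel `|x|^(-4)`.**  For `η > 0` there is
`C > 0` such that for all `λ > 0`, `z, x ∈ ℝ⁶`,
`∫ |x-y|^(-4) λ² (1+λ|y-z|)^(-(6+η)) dy ≤ C (1+λ|x-z|)^(-4)`. -/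
theorem riesz_convolution_estimate_R6 (η : ℝ) (hη : 0 < η) :
    ∃ C : ℝ, 0 < C ∧ ∀ l : ℝ, 0 < l → ∀ z x : EuclideanSpace ℝ (Fin 6),
      ∫⁻ y : EuclideanSpace ℝ (Fin 6),
          ENNReal.ofReal (‖x - y‖ ^ (-(4 : ℝ)) * (l ^ 2 * (1 + l * ‖y - z‖) ^ (-(6 + η)))) ≤
        ENNReal.ofReal (C * (1 + l * ‖x - z‖) ^ (-(4 : ℝ))) := by
  set V : ℝ≥0∞ := volume (ball (0:E6) 1) with hVdef
  have hVfin : V ≠ ⊤ := measure_ball_lt_top.ne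
  set K : ℝ := (32 * V).toReal with hKdef
  have hKfin : (32 * V) ≠ ⊤ := ENNReal.mul_ne_top (by norm_num) hVfin
  have hKofReal : ENNReal.ofReal K = 32 * V := ENNReal.ofReal_toReal hKfin
  have hK0 : 0 ≤ K := ENNReal.toReal_nonneg
  set Minf : ℝ≥0∞ := ∫⁻ u : E6, ENNReal.ofReal ((1 + ‖u‖) ^ (-(6 + η))) with hMdef
  have hMfin : Minf ≠ ⊤ := by
    refine (finite_integral_one_add_norm ?_).ne
    rw [show (Module.finrank ℝ E6 : ℝ) = 6 by simp]
    linarith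
  set M : ℝ := Minf.toReal with hMr
  have hMofReal : ENNReal.ofReal M = Minf := ENNReal.ofReal_toReal hMfin
  have hM0 : 0 ≤ M := ENNReal.toReal_nonneg
  refine ⟨2 ^ ((4:ℝ) + η) * K + 16 * M + 1, by positivity, fun l hl z x => ?_⟩
  set C : ℝ := 2 ^ ((4:ℝ) + η) * K + 16 * M + 1 with hCdef
  set S : ℝ := 1 + l * ‖x - z‖ with hSdef
  have hS1 : 1 ≤ S := by
    have : 0 ≤ l * ‖x - z‖ := by positivity
    simp only [hSdef]; linarith
  have hS0 : 0 < S := lt_of_lt_of_le one_pos hS1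
  set R : ℝ := S / (2 * l) with hRdef
  have hR0 : 0 < R := by positivity
  have hA : MeasurableSet (closedBall x R) := measurableSet_closedBall
  set f : E6 → ℝ≥0∞ := fun y =>
    ENNReal.ofReal (‖x - y‖ ^ (-(4 : ℝ)) * (l ^ 2 * (1 + l * ‖y - z‖) ^ (-(6 + η)))) with hf
  -- piece 1 : near x
  have piece1 : ∫⁻ y in closedBall x R, f y ≤
      ENNReal.ofReal (2 ^ ((4:ℝ) + η) * K * S ^ (-(4:ℝ))) := by
    have hS2 : (0:ℝ) < S / 2 := by positivity
    have hstep : ∫⁻ y in closedBall x R, f y ≤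
        ∫⁻ y in closedBall x R,
          ENNReal.ofReal (l ^ 2 * (S / 2) ^ (-(6 + η))) *
            ENNReal.ofReal (‖x - y‖ ^ (-(4 : ℝ))) := by
      refine setLIntegral_mono' hA fun y hy => ?_
      have hxy : ‖x - y‖ ≤ R := by
        rw [mem_closedBall, dist_eq_norm] at hy; rwa [norm_sub_rev]
      have htri : ‖x - z‖ ≤ ‖x - y‖ + ‖y - z‖ := by
        have := dist_triangle x y z
        simpa [dist_eq_norm] using this
      have hlow : S / 2 ≤ 1 + l * ‖y - z‖ := by
        have h1 : l * ‖x - z‖ ≤ l * ‖x - y‖ + l * ‖y - z‖ := by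
          have := mul_le_mul_of_nonneg_left htri hl.le
          linarith [this]
        have h2 : l * ‖x - y‖ ≤ l * R := mul_le_mul_of_nonneg_left hxy hl.le
        have h3 : l * R = S / 2 := by
          rw [hRdef]; field_simp
        simp only [hSdef] at *
        linarith
      have hc : (1 + l * ‖y - z‖) ^ (-(6 + η)) ≤ (S / 2) ^ (-(6 + η)) :=
        rpow_le_rpow_of_nonpos hS2 hlow (by linarith)
      simp only [hf]
      rw [ENNReal.ofReal_mul (rpow_nonneg (norm_nonneg _) _), mul_comm]
      refine mul_le_mul' (ENNReal.ofReal_le_ofReal ?_) le_rfl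
      have : (0:ℝ) ≤ l ^ 2 := by positivity
      nlinarith [rpow_nonneg hS2.le (-(6+η))]
    refine hstep.trans ?_
    rw [lintegral_const_mul' _ _ ENNReal.ofReal_ne_top]
    refine (mul_le_mul' le_rfl (ball_riesz x hR0)).trans ?_
    rw [← hKofReal, ← mul_assoc, ← ENNReal.ofReal_mul (by positivity),
      ← ENNReal.ofReal_mul (by positivity)]
    refine ENNReal.ofReal_le_ofReal ?_
    -- real computation
    have e2 : l ^ 2 * (S / 2) ^ (-(6 + η)) * R ^ 2 * K
        = 2 ^ ((4:ℝ) + η) * K * (S ^ (-(6 + η)) * S ^ (2:ℝ)) := by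
      have eR : R ^ 2 = S ^ 2 / (4 * l ^ 2) := by
        rw [hRdef]; field_simp; ring
      have ediv : (S / 2) ^ (-(6 + η)) = S ^ (-(6 + η)) / 2 ^ (-(6 + η)) :=
        div_rpow hS0.le (by norm_num : (0:ℝ) ≤ 2) _
      have e2pow : (2:ℝ) ^ (-(6 + η)) = ((2:ℝ) ^ (6 + η))⁻¹ :=
        rpow_neg (by norm_num) _
      have e6 : (2:ℝ) ^ ((6:ℝ) + η) = 4 * 2 ^ ((4:ℝ) + η) := by
        rw [show (6:ℝ) + η = 2 + ((4:ℝ) + η) by ring, rpow_add (by norm_num)]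
        norm_num
      have eS2 : S ^ (2:ℝ) = S ^ 2 := by
        rw [show (2:ℝ) = ((2:ℕ):ℝ) by norm_num, rpow_natCast]
      rw [ediv, e2pow, e6, eR, eS2]
      have hl' : l ≠ 0 := hl.ne'
      field_simp
    have e3 : S ^ (-(6 + η)) * S ^ (2:ℝ) = S ^ (-((4:ℝ) + η)) := by
      rw [← rpow_add hS0]; congr 1; ring
    have e4 : S ^ (-((4:ℝ) + η)) ≤ S ^ (-(4:ℝ)) :=
      rpow_le_rpow_of_exponent_le hS1 (by linarith)
    rw [e2, e3]
    have h2K : (0:ℝ) ≤ 2 ^ ((4:ℝ) + η) * K := by positivity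
    exact mul_le_mul_of_nonneg_left e4 h2K
  -- piece 2 : far from x
  have piece2 : ∫⁻ y in (closedBall x R)ᶜ, f y ≤
      ENNReal.ofReal (16 * M * S ^ (-(4:ℝ))) := by
    have hstep : ∫⁻ y in (closedBall x R)ᶜ, f y ≤
        ∫⁻ y in (closedBall x R)ᶜ,
          ENNReal.ofReal (16 * S ^ (-(4:ℝ))) *
            ENNReal.ofReal (l ^ 6 * (1 + l * ‖y - z‖) ^ (-(6 + η))) := by
      refine setLIntegral_mono' hA.compl fun y hy => ?_
      have hxy : R ≤ ‖x - y‖ := by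
        rw [mem_compl_iff, mem_closedBall, not_le, dist_eq_norm] at hy
        rw [norm_sub_rev]; exact hy.le
      have ha : ‖x - y‖ ^ (-(4:ℝ)) ≤ R ^ (-(4:ℝ)) :=
        rpow_le_rpow_of_nonpos hR0 hxy (by norm_num)
      have hRval : R ^ (-(4:ℝ)) = 16 * l ^ 4 * S ^ (-(4:ℝ)) := by
        have h2l : (0:ℝ) ≤ 2 * l := by positivity
        rw [hRdef, div_rpow hS0.le h2l, rpow_neg h2l]
        rw [show ((2:ℝ) * l) ^ (4:ℝ) = 16 * l ^ 4 by
          rw [mul_rpow (by norm_num) hl.le, show (4:ℝ) = ((4:ℕ):ℝ) by norm_num,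
            rpow_natCast, rpow_natCast]
          norm_num]
        field_simp
      simp only [hf]
      rw [← ENNReal.ofReal_mul (by positivity)]
      refine ENNReal.ofReal_le_ofReal ?_
      have ht0 : (0:ℝ) ≤ (1 + l * ‖y - z‖) ^ (-(6 + η)) := rpow_nonneg (by positivity) _
      calc ‖x - y‖ ^ (-(4:ℝ)) * (l ^ 2 * (1 + l * ‖y - z‖) ^ (-(6 + η)))
          ≤ R ^ (-(4:ℝ)) * (l ^ 2 * (1 + l * ‖y - z‖) ^ (-(6 + η))) := by
            refine mul_le_mul_of_nonneg_right ha (by positivity)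
        _ = 16 * S ^ (-(4:ℝ)) * (l ^ 6 * (1 + l * ‖y - z‖) ^ (-(6 + η))) := by
            rw [hRval]; ring
    refine hstep.trans ?_
    rw [lintegral_const_mul' _ _ ENNReal.ofReal_ne_top]
    refine le_trans (mul_le_mul' le_rfl (setLIntegral_le_lintegral _ _)) ?_
    rw [show ∫⁻ y : E6, ENNReal.ofReal (l ^ 6 * (1 + l * ‖y - z‖) ^ (-(6 + η))) = Minf from
      (tail_int (6 + η) hl z).trans hMdef.symm]
    rw [← hMofReal, ← ENNReal.ofReal_mul (by positivity)]
    refine ENNReal.ofReal_le_ofReal (le_of_eq ?_)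
    ring
  calc ∫⁻ y : E6, f y
      = (∫⁻ y in closedBall x R, f y) + ∫⁻ y in (closedBall x R)ᶜ, f y :=
        (lintegral_add_compl f hA).symm
    _ ≤ ENNReal.ofReal (2 ^ ((4:ℝ) + η) * K * S ^ (-(4:ℝ)))
        + ENNReal.ofReal (16 * M * S ^ (-(4:ℝ))) := add_le_add piece1 piece2
    _ ≤ ENNReal.ofReal (C * S ^ (-(4:ℝ))) := by
        rw [← ENNReal.ofReal_add (by positivity) (by positivity)]
        refine ENNReal.ofReal_le_ofReal ?_
        have hSneg : (0:ℝ) ≤ S ^ (-(4:ℝ)) := rpow_nonneg hS0.le _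
        rw [hCdef]
        nlinarith
end
end

section
/- Let N be a positive integer and let s be a real number with 0 < s < N/2. Then for every x ∈ ℝ^N: ∫_{ℝ^N} |x−y|^{−2s} (1+|y|²)^{−(N−s)} dy = I(s) · (1+|x|²)^{−s}, where I(s) = π^{N/2} Γ((N−2s)/2)/Γ(N−s). -/
open MeasureTheory Real Set ENNReal


section RieszBubbleAux


-- L1 lintegral gamma
lemma lint_gamma {a r : ℝ} (ha : 0 < a) (hr : 0 < r) :
    ∫⁻ t in Ioi (0:ℝ), ENNReal.ofReal (t ^ (a - 1) * rexp (-(r * t))) =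
      ENNReal.ofReal (r ^ (-a) * Real.Gamma a) := by
  have hint : IntegrableOn (fun t : ℝ => t ^ (a - 1) * rexp (-(r * t))) (Ioi 0) := by
    have := integrableOn_rpow_mul_exp_neg_mul_rpow (p := 1) (s := a - 1) (b := r)
      (by linarith) zero_lt_one hr
    refine this.congr_fun (fun t ht => ?_) measurableSet_Ioi
    simp only [Real.rpow_one, neg_mul]
  rw [← ofReal_integral_eq_lintegral_ofReal hint ?_]
  · rw [Real.integral_rpow_mul_exp_neg_mul_Ioi ha hr]
    congr 1
    rw [one_div, ← Real.rpow_neg_one, ← Real.rpow_mul hr.le, neg_one_mul]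
  · filter_upwards [self_mem_ae_restrict measurableSet_Ioi] with t ht
    have : (0:ℝ) < t := ht
    positivity

lemma lint_scale {c : ℝ} (hc : 0 < c) (g : ℝ → ℝ≥0∞) (hg : Measurable g) :
    ∫⁻ u in Ioi (0:ℝ), g u = ENNReal.ofReal c * ∫⁻ w in Ioi (0:ℝ), g (c * w) := by
  have hmap : Measure.map (fun w : ℝ => c * w) volume = ENNReal.ofReal c⁻¹ • volume := by
    simpa [abs_of_pos (inv_pos.mpr hc)] using Real.map_volume_mul_left hc.ne'
  have hpre : (fun w : ℝ => c * w) ⁻¹' (Ioi 0) = Ioi 0 := by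
    ext w; simp [mem_Ioi, mul_pos_iff_of_pos_left hc]
  have h1 : ∫⁻ w, (Ioi (0:ℝ)).indicator g (c * w) =
      ENNReal.ofReal c⁻¹ * ∫⁻ u, (Ioi (0:ℝ)).indicator g u := by
    rw [← lintegral_map (hg.indicator measurableSet_Ioi) (measurable_const_mul c), hmap,
      lintegral_smul_measure, smul_eq_mul]
  have h2 : ∀ w : ℝ, (Ioi (0:ℝ)).indicator g (c * w) = (Ioi (0:ℝ)).indicator (fun w => g (c * w)) w := by
    intro w
    by_cases hw : w ∈ Ioi (0:ℝ)
    · rw [indicator_of_mem hw, indicator_of_mem (by rw [← hpre] at hw; exact hw)]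
    · rw [indicator_of_notMem hw, indicator_of_notMem (by rw [← hpre] at hw; exact hw)]
  rw [← lintegral_indicator measurableSet_Ioi, ← lintegral_indicator measurableSet_Ioi]
  simp_rw [← h2]
  rw [h1, ← mul_assoc, ← ENNReal.ofReal_mul hc.le, mul_inv_cancel₀ hc.ne', ENNReal.ofReal_one,
    one_mul]

variable {V : Type*} [NormedAddCommGroup V] [InnerProductSpace ℝ V] [FiniteDimensional ℝ V]
  [MeasurableSpace V] [BorelSpace V]

lemma integrable_gauss {b : ℝ} (hb : 0 < b) :
    Integrable (fun v : V => rexp (-(b * ‖v‖ ^ 2))) := by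
  have h := (GaussianFourier.integrable_cexp_neg_mul_sq_norm_add (V := V)
    (show 0 < (b : ℂ).re by simpa using hb) 0 0).norm
  refine h.congr (Filter.Eventually.of_forall fun v => ?_)
  simp only [zero_mul, add_zero, Complex.norm_exp]
  rw [show (-(b:ℂ) * (‖v‖:ℂ) ^ 2) = ((-(b * ‖v‖ ^ 2) : ℝ) : ℂ) by push_cast; ring,
    Complex.ofReal_re]
lemma lint_gauss {b : ℝ} (hb : 0 < b) (m : V) :
    ∫⁻ y : V, ENNReal.ofReal (rexp (-(b * ‖y - m‖ ^ 2))) =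
      ENNReal.ofReal ((π / b) ^ ((Module.finrank ℝ V : ℝ) / 2)) := by
  have hint : Integrable (fun y : V => rexp (-(b * ‖y - m‖ ^ 2))) :=
    (integrable_gauss hb).comp_sub_right m
  rw [← ofReal_integral_eq_lintegral_ofReal hint
    (Filter.Eventually.of_forall fun y => (exp_pos _).le)]
  congr 1
  rw [integral_sub_right_eq_self (fun v : V => rexp (-(b * ‖v‖ ^ 2))) m]
  simpa [neg_mul] using GaussianFourier.integral_rexp_neg_mul_sq_norm (V := V) hb

lemma lint_beta {a b R : ℝ} (ha : 0 < a) (hb : 0 < b) (hR : 0 < R) :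
    ∫⁻ v in Ioi (0:ℝ), ENNReal.ofReal (v ^ (a - 1) * (R + v) ^ (-(a + b))) =
      ENNReal.ofReal (R ^ (-b) * (Real.Gamma a * Real.Gamma b / Real.Gamma (a + b))) := by
  have hab : 0 < a + b := by linarith
  have hΓab : 0 < Real.Gamma (a + b) := Real.Gamma_pos_of_pos hab
  set F : ℝ → ℝ → ℝ≥0∞ := fun v u =>
    ENNReal.ofReal (v ^ (a - 1) * (u ^ (a + b - 1) * rexp (-((R + v) * u)))) with hF
  have hFmeas : AEMeasurable (Function.uncurry F)
      ((volume.restrict (Ioi (0:ℝ))).prod (volume.restrict (Ioi (0:ℝ)))) := by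
    apply Measurable.aemeasurable
    apply Measurable.ennreal_ofReal
    fun_prop
  have key1 : ∀ v ∈ Ioi (0:ℝ), ∫⁻ u in Ioi (0:ℝ), F v u =
      ENNReal.ofReal (Real.Gamma (a + b)) *
        ENNReal.ofReal (v ^ (a - 1) * (R + v) ^ (-(a + b))) := by
    intro v hv
    have hv' : (0:ℝ) < v := hv
    have h1 : ∫⁻ u in Ioi (0:ℝ), F v u =
        ENNReal.ofReal (v ^ (a - 1)) *
          ∫⁻ u in Ioi (0:ℝ), ENNReal.ofReal (u ^ (a + b - 1) * rexp (-((R + v) * u))) := by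
      rw [← lintegral_const_mul' _ _ ofReal_ne_top]
      refine lintegral_congr fun u => ?_
      rw [hF, ← ENNReal.ofReal_mul (by positivity)]
    rw [h1, lint_gamma hab (by linarith), ← ENNReal.ofReal_mul (by positivity)]
    rw [← ENNReal.ofReal_mul hΓab.le]
    congr 1; ring
  have key2 : ∀ u ∈ Ioi (0:ℝ), ∫⁻ v in Ioi (0:ℝ), F v u =
      ENNReal.ofReal (Real.Gamma a) * ENNReal.ofReal (u ^ (b - 1) * rexp (-(R * u))) := by
    intro u hu
    have hu' : (0:ℝ) < u := hu
    have h1 : ∀ v ∈ Ioi (0:ℝ), F v u =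
        ENNReal.ofReal (u ^ (a + b - 1) * rexp (-(R * u))) *
          ENNReal.ofReal (v ^ (a - 1) * rexp (-(u * v))) := by
      intro v hv
      have hv' : (0:ℝ) < v := hv
      simp only [hF]
      rw [← ENNReal.ofReal_mul (by positivity)]
      congr 1
      rw [show -((R + v) * u) = -(R * u) + -(u * v) by ring, Real.exp_add]
      ring
    rw [setLIntegral_congr_fun measurableSet_Ioi (h1),
      lintegral_const_mul' _ _ ofReal_ne_top, lint_gamma ha hu',
      ← ENNReal.ofReal_mul (by positivity), ← ENNReal.ofReal_mul (Real.Gamma_pos_of_pos ha).le]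
    congr 1
    rw [show u ^ (a + b - 1) * rexp (-(R * u)) * (u ^ (-a) * Real.Gamma a)
        = Real.Gamma a * (u ^ (a + b - 1) * u ^ (-a) * rexp (-(R * u))) by ring,
      ← Real.rpow_add hu']
    ring_nf
  have hswap : ∫⁻ v in Ioi (0:ℝ), ∫⁻ u in Ioi (0:ℝ), F v u =
      ∫⁻ u in Ioi (0:ℝ), ∫⁻ v in Ioi (0:ℝ), F v u := lintegral_lintegral_swap hFmeas
  rw [setLIntegral_congr_fun measurableSet_Ioi (key1),
    lintegral_const_mul' _ _ ofReal_ne_top] at hswap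
  rw [setLIntegral_congr_fun measurableSet_Ioi (key2),
    lintegral_const_mul' _ _ ofReal_ne_top, lint_gamma hb hR] at hswap
  apply (ENNReal.mul_right_inj (a := ENNReal.ofReal (Real.Gamma (a+b)))
    (ENNReal.ofReal_pos.2 hΓab).ne' ofReal_ne_top).mp
  rw [hswap, ← ENNReal.ofReal_mul (Real.Gamma_pos_of_pos ha).le,
    ← ENNReal.ofReal_mul hΓab.le]
  congr 1
  field_simp

lemma sq_complete {V : Type*} [NormedAddCommGroup V] [InnerProductSpace ℝ V]
    {t u : ℝ} (ht : 0 < t) (hu : 0 < u) (x y : V) :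
    t * ‖x - y‖ ^ 2 + u * ‖y‖ ^ 2 =
      (t + u) * ‖y - (t / (t + u)) • x‖ ^ 2 + t * u / (t + u) * ‖x‖ ^ 2 := by
  have htu : t + u ≠ 0 := by positivity
  have h1 : ‖x - y‖ ^ 2 = ‖x‖ ^ 2 - 2 * (inner ℝ x y : ℝ) + ‖y‖ ^ 2 := norm_sub_sq_real x y
  have h2 : ‖y - (t / (t + u)) • x‖ ^ 2
      = ‖y‖ ^ 2 - 2 * (t / (t + u)) * (inner ℝ x y : ℝ) + (t / (t + u)) ^ 2 * ‖x‖ ^ 2 := by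
    rw [norm_sub_sq_real, real_inner_smul_right, norm_smul, mul_pow, real_inner_comm]
    rw [Real.norm_of_nonneg (by positivity : (0:ℝ) ≤ t / (t + u))]
    ring
  rw [h1, h2]
  field_simp
  ring

lemma bubble_lint (N : ℕ) (hN : 0 < N) (s : ℝ) (hs0 : 0 < s) (hs : s < (N : ℝ) / 2)
    (x : EuclideanSpace ℝ (Fin N)) :
    ∫⁻ y : EuclideanSpace ℝ (Fin N),
        ENNReal.ofReal (‖x - y‖ ^ (-(2 * s)) * (1 + ‖y‖ ^ 2) ^ (-((N : ℝ) - s))) =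
      ENNReal.ofReal ((π ^ ((N : ℝ) / 2) * Real.Gamma (((N : ℝ) - 2 * s) / 2) /
        Real.Gamma ((N : ℝ) - s)) * (1 + ‖x‖ ^ 2) ^ (-s)) := by
  let E := EuclideanSpace ℝ (Fin N)
  have hN' : (0:ℝ) < N := by exact_mod_cast hN
  have hNs : 0 < (N:ℝ) - s := by linarith
  have hn2 : 0 < (N:ℝ) / 2 := by linarith
  have h2s : 0 < (N:ℝ) / 2 - s := by linarith
  have hΓs : 0 < Real.Gamma s := Real.Gamma_pos_of_pos hs0
  have hΓns : 0 < Real.Gamma ((N:ℝ) - s) := Real.Gamma_pos_of_pos hNs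
  have hΓn2 : 0 < Real.Gamma ((N:ℝ) / 2) := Real.Gamma_pos_of_pos hn2
  set R : ℝ := 1 + ‖x‖ ^ 2 with hRdef
  have hR : 0 < R := by positivity
  haveI : Nonempty (Fin N) := ⟨⟨0, hN⟩⟩
  set G : E → ℝ → ℝ → ℝ≥0∞ := fun y t u =>
    ENNReal.ofReal ((t ^ (s - 1) * rexp (-(‖x - y‖ ^ 2 * t))) *
      (u ^ ((N:ℝ) - s - 1) * rexp (-((1 + ‖y‖ ^ 2) * u)))) with hG
  set K : ℝ → ℝ → ℝ := fun t u =>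
    t ^ (s - 1) * u ^ ((N:ℝ) - s - 1) * rexp (-u) *
      rexp (-(t * u / (t + u) * ‖x‖ ^ 2)) * (π / (t + u)) ^ ((N:ℝ) / 2) with hK
  set lam : ℝ → ℝ := fun w => w * (R + w) / (1 + w) with hlam
  set P : ℝ → ℝ := fun w => π ^ ((N:ℝ) / 2) * (w ^ ((N:ℝ) - s - 1) *
    ((1 + w) ^ ((N:ℝ) / 2))⁻¹) with hP
  -- measurability of G as a function of the triple
  have mG : Measurable (fun q : (E × ℝ) × ℝ => G q.1.1 q.1.2 q.2) := by
    apply Measurable.ennreal_ofReal; fun_prop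
  -- Step 1: a.e. identity
  have step1 : ∀ᵐ y : E, ENNReal.ofReal (Real.Gamma s * Real.Gamma ((N:ℝ) - s)) *
      ENNReal.ofReal (‖x - y‖ ^ (-(2 * s)) * (1 + ‖y‖ ^ 2) ^ (-((N : ℝ) - s))) =
      ∫⁻ t in Ioi (0:ℝ), ∫⁻ u in Ioi (0:ℝ), G y t u := by
    have hx0 : volume ({x} : Set E) = 0 := measure_singleton x
    filter_upwards [compl_mem_ae_iff.mpr hx0] with y hy
    have hxy : (0:ℝ) < ‖x - y‖ := by
      rw [norm_pos_iff]
      exact sub_ne_zero.mpr (Ne.symm hy)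
    have hxy2 : (0:ℝ) < ‖x - y‖ ^ 2 := by positivity
    have hy2 : (0:ℝ) < 1 + ‖y‖ ^ 2 := by positivity
    have inner_u : ∀ t ∈ Ioi (0:ℝ), ∫⁻ u in Ioi (0:ℝ), G y t u =
        ENNReal.ofReal ((1 + ‖y‖ ^ 2) ^ (-((N:ℝ) - s)) * Real.Gamma ((N:ℝ) - s)) *
          ENNReal.ofReal (t ^ (s - 1) * rexp (-(‖x - y‖ ^ 2 * t))) := by
      intro t ht
      have ht' : (0:ℝ) < t := ht
      have h1 : ∀ u : ℝ, G y t u =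
          ENNReal.ofReal (t ^ (s - 1) * rexp (-(‖x - y‖ ^ 2 * t))) *
            ENNReal.ofReal (u ^ ((N:ℝ) - s - 1) * rexp (-((1 + ‖y‖ ^ 2) * u))) := by
        intro u
        simp only [hG]
        rw [← ENNReal.ofReal_mul (by positivity)]
      simp only [h1]
      rw [lintegral_const_mul' _ _ ofReal_ne_top,
        show (N:ℝ) - s - 1 = ((N:ℝ) - s) - 1 by ring, lint_gamma hNs hy2, mul_comm]
    rw [setLIntegral_congr_fun measurableSet_Ioi (inner_u),
      lintegral_const_mul' _ _ ofReal_ne_top, lint_gamma hs0 hxy2,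
      ← ENNReal.ofReal_mul (by positivity), ← ENNReal.ofReal_mul (by positivity)]
    congr 1
    have hpow : (‖x - y‖ ^ 2) ^ (-s) = ‖x - y‖ ^ (-(2 * s)) := by
      rw [← Real.rpow_natCast ‖x - y‖ 2, ← Real.rpow_mul (norm_nonneg _),
        show ((2:ℕ):ℝ) * -s = -(2 * s) by push_cast; ring]
    rw [← hpow]
    ring
  -- Step 3: the inner y-integral
  have step3 : ∀ t ∈ Ioi (0:ℝ), ∀ u ∈ Ioi (0:ℝ),
      ∫⁻ y : E, G y t u = ENNReal.ofReal (K t u) := by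
    intro t ht u hu
    have ht' : (0:ℝ) < t := ht
    have hu' : (0:ℝ) < u := hu
    have htu : (0:ℝ) < t + u := by linarith
    set m : E := (t / (t + u)) • x with hm
    set c : ℝ := t ^ (s - 1) * u ^ ((N:ℝ) - s - 1) * rexp (-u) *
      rexp (-(t * u / (t + u) * ‖x‖ ^ 2)) with hc
    have hc0 : 0 ≤ c := by simp only [hc]; positivity
    have hpt : ∀ y : E, G y t u = ENNReal.ofReal c *
        ENNReal.ofReal (rexp (-((t + u) * ‖y - m‖ ^ 2))) := by
      intro y
      simp only [hG, hc]
      rw [← ENNReal.ofReal_mul (by positivity)]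
      congr 1
      have hsq := sq_complete ht' hu' x y
      rw [show (t ^ (s - 1) * rexp (-(‖x - y‖ ^ 2 * t))) *
          (u ^ ((N:ℝ) - s - 1) * rexp (-((1 + ‖y‖ ^ 2) * u))) =
          t ^ (s - 1) * u ^ ((N:ℝ) - s - 1) *
            (rexp (-(‖x - y‖ ^ 2 * t)) * rexp (-((1 + ‖y‖ ^ 2) * u))) by ring,
        ← Real.exp_add,
        show t ^ (s - 1) * u ^ ((N:ℝ) - s - 1) * rexp (-u) *
            rexp (-(t * u / (t + u) * ‖x‖ ^ 2)) * rexp (-((t + u) * ‖y - m‖ ^ 2)) =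
          t ^ (s - 1) * u ^ ((N:ℝ) - s - 1) *
            (rexp (-u) * (rexp (-(t * u / (t + u) * ‖x‖ ^ 2)) *
              rexp (-((t + u) * ‖y - m‖ ^ 2)))) by ring,
        ← Real.exp_add, ← Real.exp_add]
      congr 2
      linarith
    simp only [hpt]
    rw [lintegral_const_mul' _ _ ofReal_ne_top, lint_gauss htu m,
      ← ENNReal.ofReal_mul hc0]
    congr 1
    simp only [hK, hc]
    have hfr : ((Module.finrank ℝ E : ℕ) : ℝ) = (N:ℝ) := by
      norm_cast
      simp [E, finrank_euclideanSpace_fin]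
    rw [hfr]
  -- Step 4 pointwise identity for the scaling substitution
  have step4 : ∀ t ∈ Ioi (0:ℝ), ∀ w ∈ Ioi (0:ℝ),
      t * K t (t * w) = P w * (t ^ ((N:ℝ) / 2 - 1) * rexp (-(lam w * t))) := by
    intro t ht w hw
    have ht' : (0:ℝ) < t := ht
    have hw' : (0:ℝ) < w := hw
    have e2 : t + t * w = t * (1 + w) := by ring
    have e1 : (t * w) ^ ((N:ℝ) - s - 1) = t ^ ((N:ℝ) - s - 1) * w ^ ((N:ℝ) - s - 1) :=
      Real.mul_rpow ht'.le hw'.le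
    have e3 : (π / (t * (1 + w))) ^ ((N:ℝ)/2) =
        π ^ ((N:ℝ)/2) * ((t ^ ((N:ℝ)/2))⁻¹ * ((1 + w) ^ ((N:ℝ)/2))⁻¹) := by
      rw [Real.div_rpow pi_pos.le (by positivity), Real.mul_rpow ht'.le (by positivity),
        div_eq_mul_inv, mul_inv]
    have e4 : rexp (-(t * w)) * rexp (-(t * (t * w) / (t * (1 + w)) * ‖x‖ ^ 2)) =
        rexp (-(lam w * t)) := by
      rw [← Real.exp_add]
      congr 1
      simp only [hlam, hRdef]
      field_simp
      ring
    have e5 : t * t ^ (s - 1) * t ^ ((N:ℝ) - s - 1) * (t ^ ((N:ℝ)/2))⁻¹ = t ^ ((N:ℝ)/2 - 1) := by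
      nth_rewrite 1 [← Real.rpow_one t]
      rw [← Real.rpow_neg ht'.le, ← Real.rpow_add ht', ← Real.rpow_add ht', ← Real.rpow_add ht']
      congr 1
      ring
    simp only [hK, hP]
    rw [e2, e1, e3, ← e4, ← e5]
    ring
  -- Step 5 pointwise identity after the t-integration
  have step5 : ∀ w ∈ Ioi (0:ℝ),
      ENNReal.ofReal (P w) * ENNReal.ofReal ((lam w) ^ (-((N:ℝ) / 2)) * Real.Gamma ((N:ℝ) / 2)) =
      ENNReal.ofReal (π ^ ((N:ℝ) / 2) * Real.Gamma ((N:ℝ) / 2)) *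
        ENNReal.ofReal (w ^ ((N:ℝ) / 2 - s - 1) * (R + w) ^ (-((N:ℝ) / 2))) := by
    intro w hw
    have hw' : (0:ℝ) < w := hw
    rw [← ENNReal.ofReal_mul (by simp only [hP]; positivity),
      ← ENNReal.ofReal_mul (by positivity)]
    congr 1
    simp only [hP, hlam]
    rw [Real.rpow_neg (by positivity : (0:ℝ) ≤ w * (R + w) / (1 + w)) ((N:ℝ)/2),
      Real.div_rpow (by positivity) (by positivity : (0:ℝ) ≤ 1 + w),
      Real.mul_rpow hw'.le (by positivity : (0:ℝ) ≤ R + w),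
      Real.rpow_neg (by positivity : (0:ℝ) ≤ R + w),
      show (N:ℝ)/2 - s - 1 = ((N:ℝ) - s - 1) + (-((N:ℝ)/2)) by ring,
      Real.rpow_add hw', Real.rpow_neg hw'.le]
    have h1 : ((1:ℝ) + w) ^ ((N:ℝ)/2) ≠ 0 := by positivity
    have h2 : (w:ℝ) ^ ((N:ℝ)/2) ≠ 0 := by positivity
    have h3 : ((R:ℝ) + w) ^ ((N:ℝ)/2) ≠ 0 := by positivity
    field_simp
  have hlampos : ∀ w ∈ Ioi (0:ℝ), 0 < lam w := by
    intro w hw; have : (0:ℝ) < w := hw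
    rw [hlam]; positivity
  -- main chain
  apply (ENNReal.mul_right_inj (a := ENNReal.ofReal (Real.Gamma s * Real.Gamma ((N:ℝ) - s)))
    (ENNReal.ofReal_pos.2 (by positivity)).ne' ofReal_ne_top).mp
  rw [← lintegral_const_mul' _ _ ofReal_ne_top, lintegral_congr_ae step1]
  -- swap y and t
  have sw1 : AEMeasurable (Function.uncurry fun (y : E) (t : ℝ) => ∫⁻ u in Ioi (0:ℝ), G y t u)
      (volume.prod (volume.restrict (Ioi (0:ℝ)))) := by
    apply Measurable.aemeasurable
    exact Measurable.lintegral_prod_right' (f := fun q : (E × ℝ) × ℝ => G q.1.1 q.1.2 q.2) mG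
  rw [lintegral_lintegral_swap sw1]
  -- for each t, swap y and u, then integrate over y
  have chain1 : ∀ t ∈ Ioi (0:ℝ),
      ∫⁻ y : E, ∫⁻ u in Ioi (0:ℝ), G y t u = ∫⁻ u in Ioi (0:ℝ), ENNReal.ofReal (K t u) := by
    intro t ht
    rw [lintegral_lintegral_swap ?_]
    · exact setLIntegral_congr_fun measurableSet_Ioi
        (fun u hu => step3 t ht u hu)
    · apply Measurable.aemeasurable
      exact mG.comp (f := fun q : E × ℝ => ((q.1, t), q.2)) (by fun_prop)
  rw [setLIntegral_congr_fun measurableSet_Ioi (chain1)]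
  -- scaling substitution u = t * w inside, for each t
  have chain2 : ∀ t ∈ Ioi (0:ℝ),
      ∫⁻ u in Ioi (0:ℝ), ENNReal.ofReal (K t u) =
        ∫⁻ w in Ioi (0:ℝ), ENNReal.ofReal (t * K t (t * w)) := by
    intro t ht
    have ht' : (0:ℝ) < t := ht
    rw [lint_scale ht' _ (by apply Measurable.ennreal_ofReal; rw [hK]; fun_prop),
      ← lintegral_const_mul' _ _ ofReal_ne_top]
    refine lintegral_congr fun w => ?_
    rw [← ENNReal.ofReal_mul ht'.le]
  rw [setLIntegral_congr_fun measurableSet_Ioi (chain2)]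
  -- rewrite with step4
  have chain3 : ∀ t ∈ Ioi (0:ℝ),
      ∫⁻ w in Ioi (0:ℝ), ENNReal.ofReal (t * K t (t * w)) =
        ∫⁻ w in Ioi (0:ℝ),
          ENNReal.ofReal (P w) * ENNReal.ofReal (t ^ ((N:ℝ) / 2 - 1) * rexp (-(lam w * t))) := by
    intro t ht
    refine setLIntegral_congr_fun measurableSet_Ioi (fun w hw => ?_)
    have hw' : (0:ℝ) < w := hw
    rw [step4 t ht w hw, ENNReal.ofReal_mul (by simp only [hP]; positivity)]
  rw [setLIntegral_congr_fun measurableSet_Ioi (chain3)]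
  -- swap t and w
  have sw3 : AEMeasurable (Function.uncurry fun (t w : ℝ) =>
      ENNReal.ofReal (P w) * ENNReal.ofReal (t ^ ((N:ℝ) / 2 - 1) * rexp (-(lam w * t))))
      ((volume.restrict (Ioi (0:ℝ))).prod (volume.restrict (Ioi (0:ℝ)))) := by
    apply Measurable.aemeasurable
    refine Measurable.mul (f := fun q : ℝ × ℝ => ENNReal.ofReal (P q.2))
      (g := fun q : ℝ × ℝ => ENNReal.ofReal (q.1 ^ ((N:ℝ) / 2 - 1) * rexp (-(lam q.2 * q.1)))) ?_ ?_
    · apply Measurable.ennreal_ofReal; rw [hP]; fun_prop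
    · apply Measurable.ennreal_ofReal; rw [hlam]; fun_prop
  rw [lintegral_lintegral_swap sw3]
  -- integrate over t using lint_gamma
  have chain4 : ∀ w ∈ Ioi (0:ℝ),
      ∫⁻ t in Ioi (0:ℝ),
          ENNReal.ofReal (P w) * ENNReal.ofReal (t ^ ((N:ℝ) / 2 - 1) * rexp (-(lam w * t))) =
        ENNReal.ofReal (π ^ ((N:ℝ) / 2) * Real.Gamma ((N:ℝ) / 2)) *
          ENNReal.ofReal (w ^ ((N:ℝ) / 2 - s - 1) * (R + w) ^ (-((N:ℝ) / 2))) := by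
    intro w hw
    rw [lintegral_const_mul' _ _ ofReal_ne_top, lint_gamma hn2 (hlampos w hw), step5 w hw]
  rw [setLIntegral_congr_fun measurableSet_Ioi (chain4),
    lintegral_const_mul' _ _ ofReal_ne_top]
  -- the beta integral
  have hbeta := lint_beta (a := (N:ℝ)/2 - s) (b := s) (R := R) h2s hs0 hR
  rw [show (N:ℝ)/2 - s + s = (N:ℝ)/2 by ring] at hbeta
  rw [show (N:ℝ)/2 - s - 1 = ((N:ℝ)/2 - s) - 1 by ring, hbeta]
  -- final constants
  rw [← ENNReal.ofReal_mul (by positivity), ← ENNReal.ofReal_mul (by positivity)]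
  congr 1
  rw [show ((N:ℝ) - 2*s)/2 = (N:ℝ)/2 - s by ring]
  field_simp

end RieszBubbleAux


/-- **Exact Riesz potential identity for the standard bubble.**  For `0 < s < N/2` and all
`x ∈ ℝᴺ`, `∫ |x-y|^(-2s) (1+|y|²)^(-(N-s)) dy = I(s) (1+|x|²)^(-s)` with
`I(s) = π^(N/2) Γ((N-2s)/2)/Γ(N-s)`. -/
theorem riesz_potential_bubble_identity (N : ℕ) (hN : 0 < N) (s : ℝ)
    (hs0 : 0 < s) (hs : s < (N : ℝ) / 2) (x : EuclideanSpace ℝ (Fin N)) :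
    ∫ y : EuclideanSpace ℝ (Fin N),
        ‖x - y‖ ^ (-(2 * s)) * (1 + ‖y‖ ^ 2) ^ (-((N : ℝ) - s)) =
      (π ^ ((N : ℝ) / 2) * Gamma (((N : ℝ) - 2 * s) / 2) / Gamma ((N : ℝ) - s)) *
        (1 + ‖x‖ ^ 2) ^ (-s) := by
  have hmeas : AEStronglyMeasurable
      (fun y : EuclideanSpace ℝ (Fin N) =>
        ‖x - y‖ ^ (-(2 * s)) * (1 + ‖y‖ ^ 2) ^ (-((N : ℝ) - s))) volume := by
    apply Measurable.aestronglyMeasurable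
    fun_prop
  rw [integral_eq_lintegral_of_nonneg_ae
    (Filter.Eventually.of_forall fun y => by positivity) hmeas, bubble_lint N hN s hs0 hs x,
    ENNReal.toReal_ofReal ?_]
  have hN' : (0:ℝ) < N := by exact_mod_cast hN
  have h1 : (0:ℝ) < ((N:ℝ) - 2 * s) / 2 := by linarith
  have h2 : (0:ℝ) < (N:ℝ) - s := by linarith
  have g1 := Real.Gamma_pos_of_pos h1
  have g2 := Real.Gamma_pos_of_pos h2
  positivity
end

section
/- The function U(x) = 24√2 (1+|x|²)^{−2} on ℝ⁶ solves the critical Hartree (Choquard) equation −Δu = (1/2)(I₂ ∗ u²) u on ℝ⁶, where I₂(x) = (1/(4π³)) |x|^{−4}; that is, for every x ∈ ℝ⁶, −ΔU(x) = (1/2) (∫_{ℝ⁶} (1/(4π³)) |x−y|^{−4} U(y)² dy) U(x). -/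
open MeasureTheory Real Set

noncomputable section

local notation "E6" => EuclideanSpace ℝ (Fin 6)

/-- The Laplacian of a function on `ℝ⁶`, as the sum of the second partial derivatives. -/
def lap6 (u : EuclideanSpace ℝ (Fin 6) → ℝ) (x : EuclideanSpace ℝ (Fin 6)) : ℝ :=
  ∑ i : Fin 6,
    fderiv ℝ (fun y => fderiv ℝ u y (EuclideanSpace.single i 1)) x (EuclideanSpace.single i 1)

variable {C : ℝ}

lemma hasDerivAt_g (C s : ℝ) (hs : 0 ≤ s) :
    HasDerivAt (fun t : ℝ => C / (1 + t) ^ 2) (-2 * C / (1 + s) ^ 3) s := by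
  have hne : (1 + s) ≠ 0 := by positivity
  have hp : HasDerivAt (fun t : ℝ => (1 + t) ^ 2) (2 * (1 + s)) s := by
    simpa using ((hasDerivAt_id s).const_add 1).fun_pow 2
  have := (hasDerivAt_const s C).div hp (pow_ne_zero 2 hne)
  refine this.congr_deriv ?_
  field_simp
  ring

lemma hasFDerivAt_normsq (y : E6) :
    HasFDerivAt (fun z : E6 => ‖z‖ ^ 2) (2 • (innerSL ℝ y)) y := by
  simpa using (hasFDerivAt_id y).norm_sq

lemma hasFDerivAt_U (C : ℝ) (y : E6) :
    HasFDerivAt (fun z : E6 => C / (1 + ‖z‖ ^ 2) ^ 2)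
      ((-2 * C / (1 + ‖y‖ ^ 2) ^ 3) • (2 • (innerSL ℝ y))) y :=
  (hasDerivAt_g C (‖y‖ ^ 2) (by positivity)).comp_hasFDerivAt (f := fun z : E6 => ‖z‖ ^ 2) y (hasFDerivAt_normsq y)

lemma partial_U (C : ℝ) (y : E6) (i : Fin 6) :
    fderiv ℝ (fun z : E6 => C / (1 + ‖z‖ ^ 2) ^ 2) y (EuclideanSpace.single i 1)
      = -4 * C * y i / (1 + ‖y‖ ^ 2) ^ 3 := by
  rw [(hasFDerivAt_U C y).fderiv]
  simp [EuclideanSpace.inner_single_right]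
  ring

lemma hasDerivAt_k (s : ℝ) (hs : 0 ≤ s) :
    HasDerivAt (fun t : ℝ => ((1 + t) ^ 3)⁻¹) (-3 / (1 + s) ^ 4) s := by
  have hne : (1 + s) ≠ 0 := by positivity
  have hp : HasDerivAt (fun t : ℝ => (1 + t) ^ 3) (3 * (1 + s) ^ 2) s := by
    simpa using ((hasDerivAt_id s).const_add 1).fun_pow 3
  have := hp.inv (pow_ne_zero 3 hne)
  refine this.congr_deriv ?_
  field_simp

lemma second_partial (C : ℝ) (x : E6) (i : Fin 6) :
    fderiv ℝ (fun y : E6 =>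
        fderiv ℝ (fun z : E6 => C / (1 + ‖z‖ ^ 2) ^ 2) y (EuclideanSpace.single i 1))
      x (EuclideanSpace.single i 1)
    = -4 * C / (1 + ‖x‖ ^ 2) ^ 3 + 24 * C * (x i) ^ 2 / (1 + ‖x‖ ^ 2) ^ 4 := by
  have hfun : (fun y : E6 =>
        fderiv ℝ (fun z : E6 => C / (1 + ‖z‖ ^ 2) ^ 2) y (EuclideanSpace.single i 1))
      = fun y : E6 => (-4 * C * y i) * ((1 + ‖y‖ ^ 2) ^ 3)⁻¹ := by
    funext y
    rw [partial_U C y i]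
    ring
  rw [hfun]
  have ha : HasFDerivAt (fun y : E6 => -4 * C * y i)
      ((-4 * C) • (EuclideanSpace.proj i : E6 →L[ℝ] ℝ)) x := by
    simpa using ((EuclideanSpace.proj i : E6 →L[ℝ] ℝ).hasFDerivAt (x := x)).const_mul (-4 * C)
  have hb : HasFDerivAt (fun y : E6 => ((1 + ‖y‖ ^ 2) ^ 3)⁻¹)
      ((-3 / (1 + ‖x‖ ^ 2) ^ 4) • (2 • (innerSL ℝ x))) x :=
    (hasDerivAt_k (‖x‖ ^ 2) (by positivity)).comp_hasFDerivAt (f := fun z : E6 => ‖z‖ ^ 2) x (hasFDerivAt_normsq x)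
  have := (ha.fun_mul hb).fderiv
  rw [this]
  simp [EuclideanSpace.inner_single_right, PiLp.proj_apply]
  ring

lemma normsq_eq_sum (x : E6) : ‖x‖ ^ 2 = ∑ i, (x i) ^ 2 := by
  rw [EuclideanSpace.norm_eq, Real.sq_sqrt (by positivity)]
  simp [sq_abs]

lemma lap6_U (C : ℝ) (x : E6) :
    lap6 (fun y => C / (1 + ‖y‖ ^ 2) ^ 2) x = -24 * C / (1 + ‖x‖ ^ 2) ^ 4 := by
  unfold lap6
  have h : ∀ i : Fin 6,
      fderiv ℝ (fun y : E6 =>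
        fderiv ℝ (fun z : E6 => C / (1 + ‖z‖ ^ 2) ^ 2) y (EuclideanSpace.single i 1))
        x (EuclideanSpace.single i 1)
      = -4 * C / (1 + ‖x‖ ^ 2) ^ 3 + 24 * C * (x i) ^ 2 / (1 + ‖x‖ ^ 2) ^ 4 :=
    second_partial C x
  calc (∑ i : Fin 6, fderiv ℝ (fun y : E6 =>
        fderiv ℝ (fun z : E6 => C / (1 + ‖z‖ ^ 2) ^ 2) y (EuclideanSpace.single i 1))
        x (EuclideanSpace.single i 1))
      = ∑ i : Fin 6, (-4 * C / (1 + ‖x‖ ^ 2) ^ 3 + 24 * C * (x i) ^ 2 / (1 + ‖x‖ ^ 2) ^ 4) := by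
        exact Finset.sum_congr rfl fun i _ => h i
    _ = 6 * (-4 * C / (1 + ‖x‖ ^ 2) ^ 3) + 24 * C * (‖x‖ ^ 2) / (1 + ‖x‖ ^ 2) ^ 4 := by
        rw [Finset.sum_add_distrib, normsq_eq_sum]
        simp [Finset.mul_sum, Finset.sum_div]
    _ = -24 * C / (1 + ‖x‖ ^ 2) ^ 4 := by
        have hne : (1 + ‖x‖ ^ 2) ≠ 0 := by positivity
        field_simp
        ring

/-- Positivity of the Feynman denominator on `[0,1]`. -/
lemma Dpos {A B : ℝ} (hA : 0 < A) (hB : 0 < B) {t : ℝ} (ht0 : 0 ≤ t) (ht1 : t ≤ 1) :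
    0 < t * A + (1 - t) * B := by
  rcases eq_or_lt_of_le ht0 with h | h
  · simp [← h]; nlinarith
  · nlinarith [mul_pos h hA, mul_nonneg (by linarith : (0:ℝ) ≤ 1 - t) hB.le]

lemma hasDerivAt_F (A B : ℝ) (hA : 0 < A) (hB : 0 < B) {t : ℝ} (ht0 : 0 ≤ t) (ht1 : t ≤ 1) :
    HasDerivAt (fun τ : ℝ =>
      (B ^ 4)⁻¹ * ((τ / (τ * A + (1 - τ) * B)) ^ 2 / 2
        - A * (τ / (τ * A + (1 - τ) * B)) ^ 3
        + 3 / 4 * A ^ 2 * (τ / (τ * A + (1 - τ) * B)) ^ 4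
        - 1 / 5 * A ^ 3 * (τ / (τ * A + (1 - τ) * B)) ^ 5))
      (t * (1 - t) ^ 3 * (((t * A + (1 - t) * B) ^ 6)⁻¹)) t := by
  have hD : 0 < t * A + (1 - t) * B := Dpos hA hB ht0 ht1
  set D : ℝ := t * A + (1 - t) * B with hDdef
  have hden : HasDerivAt (fun τ : ℝ => τ * A + (1 - τ) * B) (A - B) t := by
    have h1 : HasDerivAt (fun τ : ℝ => τ * A) A t := by simpa using (hasDerivAt_id t).mul_const A
    have h2 : HasDerivAt (fun τ : ℝ => (1 - τ) * B) (-B) t := by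
      simpa using (((hasDerivAt_const t (1:ℝ)).sub (hasDerivAt_id t)).mul_const B)
    exact (h1.fun_add h2).congr_deriv (sub_eq_add_neg A B).symm
  have hu : HasDerivAt (fun τ : ℝ => τ / (τ * A + (1 - τ) * B)) (B / D ^ 2) t := by
    have := (hasDerivAt_id t).div hden hD.ne'
    refine this.congr_deriv ?_
    simp only [id, ← hDdef]
    rw [div_left_inj' (pow_ne_zero 2 hD.ne'), hDdef]
    ring
  set u : ℝ := t / D with hudef
  have h2 : HasDerivAt (fun τ : ℝ => (τ / (τ * A + (1 - τ) * B)) ^ 2 / 2)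
      (2 * u ^ 1 * (B / D ^ 2) / 2) t := (hu.pow 2).div_const 2
  have h3 : HasDerivAt (fun τ : ℝ => A * (τ / (τ * A + (1 - τ) * B)) ^ 3)
      (A * (3 * u ^ 2 * (B / D ^ 2))) t := (hu.pow 3).const_mul A
  have h4 : HasDerivAt (fun τ : ℝ => 3 / 4 * A ^ 2 * (τ / (τ * A + (1 - τ) * B)) ^ 4)
      (3 / 4 * A ^ 2 * (4 * u ^ 3 * (B / D ^ 2))) t := (hu.pow 4).const_mul (3 / 4 * A ^ 2)
  have h5 : HasDerivAt (fun τ : ℝ => 1 / 5 * A ^ 3 * (τ / (τ * A + (1 - τ) * B)) ^ 5)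
      (1 / 5 * A ^ 3 * (5 * u ^ 4 * (B / D ^ 2))) t := (hu.pow 5).const_mul (1 / 5 * A ^ 3)
  have := (((h2.fun_sub h3).fun_add h4).fun_sub h5).const_mul ((B ^ 4)⁻¹)
  refine this.congr_deriv ?_
  have h1t : (1 - t) * B = D - t * A := by rw [hDdef]; ring
  rw [hudef]
  field_simp
  ring

lemma contOn_feyn (A B : ℝ) (hA : 0 < A) (hB : 0 < B) :
    ContinuousOn (fun t : ℝ => t * (1 - t) ^ 3 * (((t * A + (1 - t) * B) ^ 6)⁻¹)) (Icc 0 1) := by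
  apply ContinuousOn.mul
  · fun_prop
  · apply ContinuousOn.inv₀ (by fun_prop)
    intro t ht
    exact pow_ne_zero 6 (Dpos hA hB ht.1 ht.2).ne'

/-- The Feynman-parameter integral. -/
lemma feyn_integral (A B : ℝ) (hA : 0 < A) (hB : 0 < B) :
    ∫ t in Ioo (0:ℝ) 1, t * (1 - t) ^ 3 * (((t * A + (1 - t) * B) ^ 6)⁻¹)
      = (20 * A ^ 2 * B ^ 4)⁻¹ := by
  have h1 : ∫ t in Ioo (0:ℝ) 1, t * (1 - t) ^ 3 * (((t * A + (1 - t) * B) ^ 6)⁻¹)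
      = ∫ t in (0:ℝ)..1, t * (1 - t) ^ 3 * (((t * A + (1 - t) * B) ^ 6)⁻¹) := by
    rw [intervalIntegral.integral_of_le zero_le_one, integral_Ioc_eq_integral_Ioo]
  rw [h1]
  have hii : IntervalIntegrable
      (fun t : ℝ => t * (1 - t) ^ 3 * (((t * A + (1 - t) * B) ^ 6)⁻¹)) volume 0 1 := by
    apply ContinuousOn.intervalIntegrable
    rw [Set.uIcc_of_le (zero_le_one (α := ℝ))]
    exact contOn_feyn A B hA hB
  rw [intervalIntegral.integral_eq_sub_of_hasDerivAt (f := fun τ : ℝ =>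
      (B ^ 4)⁻¹ * ((τ / (τ * A + (1 - τ) * B)) ^ 2 / 2
        - A * (τ / (τ * A + (1 - τ) * B)) ^ 3
        + 3 / 4 * A ^ 2 * (τ / (τ * A + (1 - τ) * B)) ^ 4
        - 1 / 5 * A ^ 3 * (τ / (τ * A + (1 - τ) * B)) ^ 5))
      (fun t ht => by
        rw [Set.uIcc_of_le (zero_le_one (α := ℝ))] at ht
        exact hasDerivAt_F A B hA hB ht.1 ht.2) hii]
  have hA' : A ≠ 0 := hA.ne'
  have hB' : B ≠ 0 := hB.ne'
  norm_num
  field_simp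
  ring_nf
  tauto

/-- The outer `t`-integral. -/
lemma outer_integral (q : ℝ) (hq : 0 ≤ q) :
    ∫ t in Ioo (0:ℝ) 1, t * (((1 + t * q) ^ 3)⁻¹) = (2 * (1 + q) ^ 2)⁻¹ := by
  have hpos : ∀ t : ℝ, 0 ≤ t → 0 < 1 + t * q := fun t ht => by nlinarith
  have h1 : ∫ t in Ioo (0:ℝ) 1, t * (((1 + t * q) ^ 3)⁻¹)
      = ∫ t in (0:ℝ)..1, t * (((1 + t * q) ^ 3)⁻¹) := by
    rw [intervalIntegral.integral_of_le zero_le_one, integral_Ioc_eq_integral_Ioo]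
  rw [h1]
  have hii : IntervalIntegrable (fun t : ℝ => t * (((1 + t * q) ^ 3)⁻¹)) volume 0 1 := by
    apply ContinuousOn.intervalIntegrable
    rw [Set.uIcc_of_le (zero_le_one (α := ℝ))]
    apply ContinuousOn.mul (by fun_prop)
    apply ContinuousOn.inv₀ (by fun_prop)
    exact fun t ht => pow_ne_zero 3 (hpos t ht.1).ne'
  have hd : ∀ t ∈ Set.uIcc (0:ℝ) 1, HasDerivAt (fun τ : ℝ => τ ^ 2 / 2 * (((1 + τ * q) ^ 2)⁻¹))
      (t * (((1 + t * q) ^ 3)⁻¹)) t := by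
    intro t ht
    rw [Set.uIcc_of_le (zero_le_one (α := ℝ))] at ht
    have hne : (1 + t * q) ≠ 0 := (hpos t ht.1).ne'
    have ha : HasDerivAt (fun τ : ℝ => τ ^ 2 / 2) t t := by
      simpa using (hasDerivAt_pow 2 t).div_const 2
    have hb : HasDerivAt (fun τ : ℝ => ((1 + τ * q) ^ 2)⁻¹)
        (-(2 * (1 + t * q) * q) / ((1 + t * q) ^ 2) ^ 2) t := by
      have hc : HasDerivAt (fun τ : ℝ => (1 + τ * q) ^ 2) (2 * (1 + t * q) * q) t := by
        have : HasDerivAt (fun τ : ℝ => 1 + τ * q) q t := by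
          simpa using ((hasDerivAt_id t).mul_const q).const_add 1
        simpa [mul_comm, mul_assoc, mul_left_comm] using this.fun_pow 2
      simpa [div_eq_mul_inv] using hc.fun_inv (pow_ne_zero 2 hne)
    have := ha.mul hb
    refine this.congr_deriv ?_
    field_simp
    ring
  rw [intervalIntegral.integral_eq_sub_of_hasDerivAt hd hii]
  have hne : (1 + q) ≠ 0 := by positivity
  norm_num
  field_simp

/-- The radial integral in six dimensions. -/
lemma radial_integral :
    ∫ r in Ioi (0:ℝ), r ^ 5 * (((r ^ 2 + 1) ^ 6)⁻¹) = 1 / 60 := by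
  have hd : ∀ r ∈ Ioi (0:ℝ), HasDerivAt (fun s : ℝ =>
      -1/6 * (((s ^ 2 + 1) ^ 3)⁻¹) + 1/4 * (((s ^ 2 + 1) ^ 4)⁻¹) - 1/10 * (((s ^ 2 + 1) ^ 5)⁻¹))
      (r ^ 5 * (((r ^ 2 + 1) ^ 6)⁻¹)) r := by
    intro r _
    have hne : (r ^ 2 + 1) ≠ 0 := by positivity
    have hw : HasDerivAt (fun s : ℝ => s ^ 2 + 1) (2 * r) r := by
      simpa using (hasDerivAt_pow 2 r).add_const 1
    have h3 : HasDerivAt (fun s : ℝ => ((s ^ 2 + 1) ^ 3)⁻¹)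
        (-(3 * (r ^ 2 + 1) ^ 2 * (2 * r)) / ((r ^ 2 + 1) ^ 3) ^ 2) r := by
      simpa [div_eq_mul_inv] using ((hw.fun_pow 3).fun_inv (pow_ne_zero 3 hne))
    have h4 : HasDerivAt (fun s : ℝ => ((s ^ 2 + 1) ^ 4)⁻¹)
        (-(4 * (r ^ 2 + 1) ^ 3 * (2 * r)) / ((r ^ 2 + 1) ^ 4) ^ 2) r := by
      simpa [div_eq_mul_inv] using ((hw.fun_pow 4).fun_inv (pow_ne_zero 4 hne))
    have h5 : HasDerivAt (fun s : ℝ => ((s ^ 2 + 1) ^ 5)⁻¹)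
        (-(5 * (r ^ 2 + 1) ^ 4 * (2 * r)) / ((r ^ 2 + 1) ^ 5) ^ 2) r := by
      simpa [div_eq_mul_inv] using ((hw.fun_pow 5).fun_inv (pow_ne_zero 5 hne))
    have := ((h3.const_mul (-1/6 : ℝ)).fun_add (h4.const_mul (1/4 : ℝ))).fun_sub
      (h5.const_mul (1/10 : ℝ))
    refine this.congr_deriv ?_
    field_simp
    ring
  have hcont : ContinuousWithinAt (fun s : ℝ =>
      -1/6 * (((s ^ 2 + 1) ^ 3)⁻¹) + 1/4 * (((s ^ 2 + 1) ^ 4)⁻¹) - 1/10 * (((s ^ 2 + 1) ^ 5)⁻¹))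
      (Ici (0:ℝ)) 0 := by
    apply Continuous.continuousWithinAt
    have : ∀ s : ℝ, (s ^ 2 + 1) ≠ 0 := fun s => by positivity
    fun_prop (disch := intro s; positivity)
  have hint : IntegrableOn (fun r : ℝ => r ^ 5 * (((r ^ 2 + 1) ^ 6)⁻¹)) (Ioi (0:ℝ)) := by
    have hbig : Integrable (fun r : ℝ => 8 * (1 + ‖r‖) ^ (-(2:ℝ))) (volume : Measure ℝ) := by
      apply Integrable.const_mul
      apply integrable_one_add_norm
      norm_num
    apply Integrable.mono' (hbig.restrict (s := Ioi (0:ℝ)))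
    · apply Continuous.aestronglyMeasurable
      fun_prop (disch := intro s; positivity)
    · filter_upwards [ae_restrict_mem measurableSet_Ioi] with r hr
      have hr0 : (0:ℝ) < r := hr
      have hnorm : ‖r‖ = r := abs_of_pos hr0
      rw [hnorm, Real.rpow_neg (by positivity), norm_mul, norm_pow]
      have h2 : (1 + r) ^ (2:ℝ) = (1 + r) ^ (2:ℕ) := by
        rw [← Real.rpow_natCast (1 + r) 2]; norm_num
      rw [h2]
      have h1 : r ^ 5 ≤ (r ^ 2 + 1) ^ 5 := pow_le_pow_left₀ hr0.le (by nlinarith) 5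
      have h2' : (1 + r) ^ 2 ≤ 2 * (r ^ 2 + 1) := by nlinarith [sq_nonneg (1 - r)]
      have hc : (0:ℝ) < (r ^ 2 + 1) ^ 6 := by positivity
      have hd' : (0:ℝ) < (1 + r) ^ 2 := by positivity
      simp only [norm_inv, norm_pow, Real.norm_eq_abs, abs_of_pos hr0,
        abs_of_pos (show (0:ℝ) < r ^ 2 + 1 by positivity)]
      rw [mul_inv_le_iff₀ hc, mul_comm (8:ℝ), mul_assoc]
      calc r ^ 5 ≤ (r ^ 2 + 1) ^ 5 := h1
        _ = ((1 + r) ^ 2)⁻¹ * ((1 + r) ^ 2 * (r ^ 2 + 1) ^ 5) := by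
            field_simp
        _ ≤ ((1 + r) ^ 2)⁻¹ * (2 * (r ^ 2 + 1) * (r ^ 2 + 1) ^ 5) := by
            apply mul_le_mul_of_nonneg_left _ (by positivity)
            apply mul_le_mul_of_nonneg_right h2' (by positivity)
        _ ≤ ((1 + r) ^ 2)⁻¹ * (8 * (r ^ 2 + 1) ^ 6) := by
            apply mul_le_mul_of_nonneg_left _ (by positivity)
            nlinarith [pow_pos (by positivity : (0:ℝ) < r ^ 2 + 1) 5, pow_pos (by positivity : (0:ℝ) < r ^ 2 + 1) 6]
  have htend : Filter.Tendsto (fun s : ℝ =>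
      -1/6 * (((s ^ 2 + 1) ^ 3)⁻¹) + 1/4 * (((s ^ 2 + 1) ^ 4)⁻¹) - 1/10 * (((s ^ 2 + 1) ^ 5)⁻¹))
      Filter.atTop (nhds 0) := by
    have hb : Filter.Tendsto (fun s : ℝ => s ^ 2 + 1) Filter.atTop Filter.atTop :=
      Filter.tendsto_atTop_add_const_right _ 1 (Filter.tendsto_pow_atTop two_ne_zero)
    have t3 : Filter.Tendsto (fun s : ℝ => (((s ^ 2 + 1) ^ 3)⁻¹)) Filter.atTop (nhds 0) :=
      ((Filter.tendsto_pow_atTop (three_ne_zero)).comp hb).inv_tendsto_atTop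
    have t4 : Filter.Tendsto (fun s : ℝ => (((s ^ 2 + 1) ^ 4)⁻¹)) Filter.atTop (nhds 0) :=
      ((Filter.tendsto_pow_atTop (by norm_num : (4:ℕ) ≠ 0)).comp hb).inv_tendsto_atTop
    have t5 : Filter.Tendsto (fun s : ℝ => (((s ^ 2 + 1) ^ 5)⁻¹)) Filter.atTop (nhds 0) :=
      ((Filter.tendsto_pow_atTop (by norm_num : (5:ℕ) ≠ 0)).comp hb).inv_tendsto_atTop
    have := ((t3.const_mul (-1/6 : ℝ)).add (t4.const_mul (1/4 : ℝ))).sub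
      (t5.const_mul (1/10 : ℝ))
    simpa using this
  rw [integral_Ioi_of_hasDerivAt_of_tendsto hcont hd hint htend]
  norm_num

lemma volume_ball6 : (volume (Metric.ball (0 : E6) 1)).toReal = π ^ 3 / 6 := by
  rw [EuclideanSpace.volume_ball]
  have hcard : Fintype.card (Fin 6) = 6 := by simp
  rw [hcard]
  have hG : Real.Gamma ((6:ℕ) / 2 + 1) = 6 := by
    have h1 : ((6:ℕ) : ℝ) / 2 + 1 = ((3:ℕ) : ℝ) + 1 := by norm_num
    rw [h1, Real.Gamma_nat_eq_factorial]
    norm_num [Nat.factorial]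
  have hs : Real.sqrt π ^ 6 = π ^ 3 := by
    rw [show (6:ℕ) = 2 * 3 by norm_num, pow_mul, Real.sq_sqrt pi_nonneg]
  rw [hG, hs]
  simp [ENNReal.toReal_ofReal (by positivity : (0:ℝ) ≤ π ^ 3 / 6)]

lemma J6 : ∫ y : E6, ((‖y‖ ^ 2 + 1) ^ 6)⁻¹ = π ^ 3 / 60 := by
  have h := integral_fun_norm_addHaar (volume : Measure E6)
    (fun r : ℝ => ((r ^ 2 + 1) ^ 6)⁻¹)
  rw [h]
  have hdim : Module.finrank ℝ E6 = 6 := finrank_euclideanSpace_fin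
  rw [hdim, measureReal_def, volume_ball6]
  have : ∫ r in Ioi (0:ℝ), r ^ (6 - 1) • (((r ^ 2 + 1) ^ 6)⁻¹)
      = ∫ r in Ioi (0:ℝ), r ^ 5 * (((r ^ 2 + 1) ^ 6)⁻¹) := by norm_num
  rw [this, radial_integral]
  simp
  ring

lemma integrable_inv_pow6 {c : ℝ} (hc : 0 < c) :
    Integrable (fun y : E6 => (((‖y‖ ^ 2 + c) ^ 6)⁻¹)) := by
  have hK : (0:ℝ) < 2 * max 1 c⁻¹ := by positivity
  set K : ℝ := 2 * max 1 c⁻¹ with hKdef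
  have hbig : Integrable (fun y : E6 => K ^ 6 * (1 + ‖y‖) ^ (-(12:ℝ))) := by
    apply Integrable.const_mul
    apply integrable_one_add_norm (E := E6)
    rw [finrank_euclideanSpace_fin]; norm_num
  apply hbig.mono'
  · apply Continuous.aestronglyMeasurable
    fun_prop (disch := intro y; positivity)
  · filter_upwards with y
    have h0 : (0:ℝ) < ‖y‖ ^ 2 + c := by positivity
    have h1 : (0:ℝ) < 1 + ‖y‖ := by positivity
    rw [Real.rpow_neg h1.le, Real.norm_eq_abs, abs_of_pos (by positivity)]
    have h12 : (1 + ‖y‖) ^ (12:ℝ) = ((1 + ‖y‖) ^ 2) ^ (6:ℕ) := by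
      rw [← Real.rpow_natCast ((1 + ‖y‖) ^ 2) 6, ← Real.rpow_natCast (1 + ‖y‖) 2,
        ← Real.rpow_mul h1.le]
      norm_num
    rw [h12]
    have hsq : (1 + ‖y‖) ^ 2 ≤ K * (‖y‖ ^ 2 + c) := by
      have hmax1 : (1:ℝ) ≤ max 1 c⁻¹ := le_max_left _ _
      have hmaxc : (1:ℝ) ≤ (max 1 c⁻¹) * c := by
        rcases le_total 1 c with h | h
        · nlinarith
        · have hcc : c⁻¹ ≤ max 1 c⁻¹ := le_max_right _ _
          calc (1:ℝ) = c⁻¹ * c := by field_simp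
            _ ≤ (max 1 c⁻¹) * c := by nlinarith [inv_pos.mpr hc]
      have hsq2 : (1 + ‖y‖) ^ 2 ≤ 2 * (1 + ‖y‖ ^ 2) := by nlinarith [sq_nonneg (1 - ‖y‖)]
      calc (1 + ‖y‖) ^ 2 ≤ 2 * (1 + ‖y‖ ^ 2) := hsq2
        _ ≤ 2 * ((max 1 c⁻¹) * c + (max 1 c⁻¹) * ‖y‖ ^ 2) := by nlinarith [sq_nonneg ‖y‖]
        _ = K * (‖y‖ ^ 2 + c) := by rw [hKdef]; ring
    have hpow : ((1 + ‖y‖) ^ 2) ^ 6 ≤ K ^ 6 * (‖y‖ ^ 2 + c) ^ 6 := by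
      calc ((1 + ‖y‖) ^ 2) ^ 6 ≤ (K * (‖y‖ ^ 2 + c)) ^ 6 :=
            pow_le_pow_left₀ (by positivity) hsq 6
        _ = K ^ 6 * (‖y‖ ^ 2 + c) ^ 6 := by ring
    rw [inv_le_iff_one_le_mul₀ (by positivity : (0:ℝ) < (‖y‖ ^ 2 + c) ^ 6)]
    calc (1:ℝ) = ((1 + ‖y‖) ^ 2) ^ 6 * (((1 + ‖y‖) ^ 2) ^ 6)⁻¹ := by
          field_simp
      _ ≤ (K ^ 6 * (‖y‖ ^ 2 + c) ^ 6) * (((1 + ‖y‖) ^ 2) ^ 6)⁻¹ := by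
          apply mul_le_mul_of_nonneg_right hpow (by positivity)
      _ = K ^ 6 * (((1 + ‖y‖) ^ 2) ^ 6)⁻¹ * (‖y‖ ^ 2 + c) ^ 6 := by ring

lemma scaled_integral {c : ℝ} (hc : 0 < c) :
    ∫ y : E6, (((‖y‖ ^ 2 + c) ^ 6)⁻¹) = π ^ 3 / 60 * (c ^ 3)⁻¹ := by
  have hsc : (0:ℝ) < Real.sqrt c := Real.sqrt_pos.mpr hc
  have key : ∀ y : E6, ((‖y‖ ^ 2 + c) ^ 6)⁻¹
      = (c ^ 6)⁻¹ * ((‖(Real.sqrt c)⁻¹ • y‖ ^ 2 + 1) ^ 6)⁻¹ := by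
    intro y
    rw [norm_smul]
    have h1 : ‖(Real.sqrt c)⁻¹‖ = (Real.sqrt c)⁻¹ := by
      rw [Real.norm_eq_abs, abs_of_pos (by positivity)]
    have hs2 : ((Real.sqrt c)⁻¹ * ‖y‖) ^ 2 = ‖y‖ ^ 2 / c := by
      rw [mul_pow, inv_pow, Real.sq_sqrt hc.le]
      ring
    rw [h1, hs2]
    rw [show ‖y‖ ^ 2 / c + 1 = (‖y‖ ^ 2 + c) / c by field_simp]
    rw [div_pow]
    field_simp
  simp_rw [key]
  rw [integral_const_mul]
  rw [MeasureTheory.Measure.integral_comp_inv_smul (volume : Measure E6)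
    (fun y : E6 => ((‖y‖ ^ 2 + 1) ^ 6)⁻¹) (Real.sqrt c)]
  rw [J6, finrank_euclideanSpace_fin]
  have h3 : |Real.sqrt c ^ 6| = c ^ 3 := by
    rw [abs_of_pos (by positivity), show (6:ℕ) = 2 * 3 by norm_num, pow_mul,
      Real.sq_sqrt hc.le]
  rw [smul_eq_mul, h3]
  have hc6 : c ^ 6 = c ^ 3 * c ^ 3 := by ring
  rw [hc6]
  field_simp

-- the completing-the-square identity
lemma D_eq (t : ℝ) (x y : E6) :
    t * ‖x - y‖ ^ 2 + (1 - t) * (1 + ‖y‖ ^ 2)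
      = ‖y - t • x‖ ^ 2 + (1 - t) * (1 + t * ‖x‖ ^ 2) := by
  have h1 : ‖x - y‖ ^ 2 = ‖x‖ ^ 2 - 2 * inner ℝ x y + ‖y‖ ^ 2 := norm_sub_sq_real x y
  have h2 : ‖y - t • x‖ ^ 2 = ‖y‖ ^ 2 - 2 * inner ℝ y (t • x) + ‖t • x‖ ^ 2 :=
    norm_sub_sq_real y (t • x)
  have h3 : (inner ℝ y (t • x) : ℝ) = t * inner ℝ y x := real_inner_smul_right y x t
  have h4 : ‖t • x‖ ^ 2 = t ^ 2 * ‖x‖ ^ 2 := by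
    rw [norm_smul, mul_pow, Real.norm_eq_abs, sq_abs]
  have h5 : (inner ℝ y x : ℝ) = inner ℝ x y := real_inner_comm x y
  rw [h1, h2, h3, h4, h5]
  ring

lemma core (x : E6) :
    ∫ y : E6, ((1 + ‖y‖ ^ 2) ^ 4)⁻¹ * (‖x - y‖ ^ 4)⁻¹
      = π ^ 3 / 6 * ((1 + ‖x‖ ^ 2) ^ 2)⁻¹ := by
  have hgm : AEStronglyMeasurable
      (fun y : E6 => ((1 + ‖y‖ ^ 2) ^ 4)⁻¹ * (‖x - y‖ ^ 4)⁻¹) volume := by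
    apply Measurable.aestronglyMeasurable
    apply Measurable.mul
    · exact (measurable_inv.comp (by fun_prop : Measurable fun y : E6 => (1 + ‖y‖ ^ 2) ^ 4))
    · exact (measurable_inv.comp (by fun_prop : Measurable fun y : E6 => ‖x - y‖ ^ 4))
  rw [integral_eq_lintegral_of_nonneg_ae (by filter_upwards with y; positivity) hgm]
  have hq : (0:ℝ) ≤ ‖x‖ ^ 2 := by positivity
  -- the parametrized integrand
  set F : ℝ → E6 → ENNReal := fun t y => ENNReal.ofReal
    (20 * (t * (1 - t) ^ 3 * (((t * ‖x - y‖ ^ 2 + (1 - t) * (1 + ‖y‖ ^ 2)) ^ 6)⁻¹))) with hF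
  have hae : ∀ᵐ (y : E6), y ≠ x := by
    have h0 : volume ({x} : Set E6) = 0 := measure_singleton x
    filter_upwards [measure_eq_zero_iff_ae_notMem.mp h0] with y hy
    simpa using hy
  have step1 : ∫⁻ y : E6, ENNReal.ofReal (((1 + ‖y‖ ^ 2) ^ 4)⁻¹ * (‖x - y‖ ^ 4)⁻¹)
      = ∫⁻ y : E6, ∫⁻ t in Ioo (0:ℝ) 1, F t y := by
    apply lintegral_congr_ae
    filter_upwards [hae] with y hy
    have hA : (0:ℝ) < ‖x - y‖ ^ 2 := by
      have hne : x - y ≠ 0 := sub_ne_zero.mpr hy.symm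
      exact pow_pos (norm_pos_iff.mpr hne) 2
    have hB : (0:ℝ) < 1 + ‖y‖ ^ 2 := by positivity
    have hint : IntegrableOn
        (fun t : ℝ => 20 * (t * (1 - t) ^ 3 *
          (((t * ‖x - y‖ ^ 2 + (1 - t) * (1 + ‖y‖ ^ 2)) ^ 6)⁻¹))) (Ioo (0:ℝ) 1) := by
      apply IntegrableOn.mono_set _ Ioo_subset_Icc_self
      apply ContinuousOn.integrableOn_Icc
      exact ((contOn_feyn (‖x - y‖ ^ 2) (1 + ‖y‖ ^ 2) hA hB).const_smul (20:ℝ))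
    rw [hF]
    rw [← MeasureTheory.ofReal_integral_eq_lintegral_ofReal hint ?_]
    · rw [integral_const_mul, feyn_integral _ _ hA hB]
      congr 1
      have h4 : ‖x - y‖ ^ 4 = (‖x - y‖ ^ 2) ^ 2 := by ring
      rw [h4]
      field_simp
    · filter_upwards [ae_restrict_mem measurableSet_Ioo] with t ht
      have hD := Dpos hA hB ht.1.le ht.2.le
      have h1t : (0:ℝ) ≤ 1 - t := by linarith [ht.2]
      have : (0:ℝ) ≤ ((t * ‖x - y‖ ^ 2 + (1 - t) * (1 + ‖y‖ ^ 2)) ^ 6)⁻¹ :=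
        inv_nonneg.mpr (pow_nonneg hD.le 6)
      exact mul_nonneg (by norm_num)
        (mul_nonneg (mul_nonneg ht.1.le (pow_nonneg h1t 3)) this)
  rw [step1]
  have hFm : Measurable (Function.uncurry F) := by
    apply ENNReal.measurable_ofReal.comp
    apply Measurable.const_mul
    apply Measurable.mul (by fun_prop)
    exact measurable_inv.comp (by fun_prop :
      Measurable fun p : ℝ × E6 => (p.1 * ‖x - p.2‖ ^ 2 + (1 - p.1) * (1 + ‖p.2‖ ^ 2)) ^ 6)
  have step2 : ∫⁻ y : E6, ∫⁻ t in Ioo (0:ℝ) 1, F t y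
      = ∫⁻ t in Ioo (0:ℝ) 1, ∫⁻ y : E6, F t y := by
    exact (lintegral_lintegral_swap (hFm.aemeasurable)).symm
  rw [step2]
  have step3 : ∫⁻ t in Ioo (0:ℝ) 1, ∫⁻ y : E6, F t y
      = ∫⁻ t in Ioo (0:ℝ) 1,
          ENNReal.ofReal (π ^ 3 / 3 * (t * (((1 + t * ‖x‖ ^ 2) ^ 3)⁻¹))) := by
    apply lintegral_congr_ae
    filter_upwards [ae_restrict_mem measurableSet_Ioo] with t ht
    have h1t : (0:ℝ) < 1 - t := by linarith [ht.2]
    have h2t : (0:ℝ) < 1 + t * ‖x‖ ^ 2 := by nlinarith [mul_nonneg ht.1.le hq]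
    set c : ℝ := (1 - t) * (1 + t * ‖x‖ ^ 2) with hcdef
    have hc : 0 < c := mul_pos h1t h2t
    have hptw : ∀ y : E6, F t y
        = ENNReal.ofReal (20 * (t * (1 - t) ^ 3))
          * ENNReal.ofReal (((‖y - t • x‖ ^ 2 + c) ^ 6)⁻¹) := by
      intro y
      rw [hF]
      simp only
      rw [D_eq t x y, ← hcdef]
      rw [show 20 * (t * (1 - t) ^ 3 * ((‖y - t • x‖ ^ 2 + c) ^ 6)⁻¹)
          = (20 * (t * (1 - t) ^ 3)) * ((‖y - t • x‖ ^ 2 + c) ^ 6)⁻¹ by ring]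
      rw [ENNReal.ofReal_mul
        (mul_nonneg (by norm_num) (mul_nonneg ht.1.le (pow_nonneg h1t.le 3)))]
    rw [lintegral_congr hptw]
    rw [lintegral_const_mul _ (Measurable.ennreal_ofReal
      ((by fun_prop : Measurable fun y : E6 => (‖y - t • x‖ ^ 2 + c) ^ 6).fun_inv))]
    have hint2 : Integrable (fun y : E6 => ((‖y - t • x‖ ^ 2 + c) ^ 6)⁻¹) := by
      have := (integrable_inv_pow6 hc).comp_sub_right (t • x)
      simpa using this
    rw [← MeasureTheory.ofReal_integral_eq_lintegral_ofReal hint2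
      (by filter_upwards with y; positivity)]
    have hval : ∫ y : E6, ((‖y - t • x‖ ^ 2 + c) ^ 6)⁻¹ = π ^ 3 / 60 * (c ^ 3)⁻¹ := by
      have h := integral_sub_right_eq_self (μ := (volume : Measure E6))
        (fun z : E6 => ((‖z‖ ^ 2 + c) ^ 6)⁻¹) (t • x)
      rw [h, scaled_integral hc]
    rw [hval, ← ENNReal.ofReal_mul
      (mul_nonneg (by norm_num) (mul_nonneg ht.1.le (pow_nonneg h1t.le 3)))]
    congr 1
    rw [hcdef]
    field_simp
    ring
  rw [step3]
  have step4 : ∫⁻ t in Ioo (0:ℝ) 1,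
        ENNReal.ofReal (π ^ 3 / 3 * (t * (((1 + t * ‖x‖ ^ 2) ^ 3)⁻¹)))
      = ENNReal.ofReal (π ^ 3 / 3 * (2 * (1 + ‖x‖ ^ 2) ^ 2)⁻¹) := by
    have hint4 : IntegrableOn
        (fun t : ℝ => π ^ 3 / 3 * (t * (((1 + t * ‖x‖ ^ 2) ^ 3)⁻¹))) (Ioo (0:ℝ) 1) := by
      apply IntegrableOn.mono_set _ Ioo_subset_Icc_self
      apply ContinuousOn.integrableOn_Icc
      apply ContinuousOn.mul continuousOn_const
      apply ContinuousOn.mul (by fun_prop)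
      apply ContinuousOn.inv₀ (by fun_prop)
      intro t ht
      have : (0:ℝ) < 1 + t * ‖x‖ ^ 2 := by nlinarith [mul_nonneg ht.1 hq]
      exact pow_ne_zero 3 this.ne'
    rw [← MeasureTheory.ofReal_integral_eq_lintegral_ofReal hint4 ?_]
    · rw [integral_const_mul]
      have := outer_integral (‖x‖ ^ 2) hq
      rw [this]
    · filter_upwards [ae_restrict_mem measurableSet_Ioo] with t ht
      have : (0:ℝ) < 1 + t * ‖x‖ ^ 2 := by nlinarith [mul_nonneg ht.1.le hq]
      have h1 : (0:ℝ) ≤ ((1 + t * ‖x‖ ^ 2) ^ 3)⁻¹ := inv_nonneg.mpr (pow_nonneg this.le 3)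
      have h2 : (0:ℝ) ≤ π ^ 3 / 3 := by positivity
      exact mul_nonneg h2 (mul_nonneg ht.1.le h1)
  rw [step4, ENNReal.toReal_ofReal (by positivity)]
  have hne : (1 + ‖x‖ ^ 2) ≠ 0 := by positivity
  field_simp
  ring

/-- **The bubble solves the critical Hartree equation.**  `U x = 24√2 (1+|x|²)^(-2)` solves
`-Δu = (1/2)(I₂ ∗ u²) u` on `ℝ⁶`, where `I₂ x = (1/(4π³)) |x|^(-4)`. -/
theorem bubble_solves_critical_hartree :
    ∀ x : EuclideanSpace ℝ (Fin 6),
      -lap6 (fun y => 24 * Real.sqrt 2 / (1 + ‖y‖ ^ 2) ^ 2) x =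
        (1 / 2) *
          (∫ y : EuclideanSpace ℝ (Fin 6),
            (1 / (4 * π ^ 3)) * (24 * Real.sqrt 2 / (1 + ‖y‖ ^ 2) ^ 2) ^ 2 / ‖x - y‖ ^ 4) *
          (24 * Real.sqrt 2 / (1 + ‖x‖ ^ 2) ^ 2) := by
  intro x
  have hlap := lap6_U (24 * Real.sqrt 2) x
  have hπ : π ≠ 0 := Real.pi_ne_zero
  have hB : (1 + ‖x‖ ^ 2) ≠ 0 := by positivity
  have hptw : ∀ y : EuclideanSpace ℝ (Fin 6),
      (1 / (4 * π ^ 3)) * (24 * Real.sqrt 2 / (1 + ‖y‖ ^ 2) ^ 2) ^ 2 / ‖x - y‖ ^ 4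
      = (288 / π ^ 3) * (((1 + ‖y‖ ^ 2) ^ 4)⁻¹ * (‖x - y‖ ^ 4)⁻¹) := by
    intro y
    have hBy : (1 + ‖y‖ ^ 2) ≠ 0 := by positivity
    rw [div_eq_mul_inv _ (‖x - y‖ ^ 4)]
    generalize (‖x - y‖ ^ 4)⁻¹ = v
    rw [div_pow, mul_pow, Real.sq_sqrt (by norm_num : (0:ℝ) ≤ 2)]
    field_simp
    ring
  have hint : ∫ y : EuclideanSpace ℝ (Fin 6),
      (1 / (4 * π ^ 3)) * (24 * Real.sqrt 2 / (1 + ‖y‖ ^ 2) ^ 2) ^ 2 / ‖x - y‖ ^ 4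
      = 48 * ((1 + ‖x‖ ^ 2) ^ 2)⁻¹ := by
    rw [integral_congr_ae (Filter.Eventually.of_forall hptw), integral_const_mul, core x]
    field_simp
    ring
  rw [hint, hlap]
  field_simp
  ring

end
end

section
/- Let α > 3 be a real constant. There exist constants c₁, c₂ > 0 (depending only on α) such that for all λ > 0 and all z₁, z_i ∈ ℝ⁶ with λ|z₁ − z_i| ≥ 2: c₁ (λ|z₁−z_i|)^{−4} ≤ ∫_{ℝ⁶} (1+|y−λz₁|²)^{−α} (1+|y−λz_i|²)^{−2} dy ≤ c₂ (λ|z₁−z_i|)^{−4}. -/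
open MeasureTheory Real

noncomputable section

local notation "E6" => EuclideanSpace ℝ (Fin 6)





private lemma aux_integrable {α : ℝ} (hα : 3 < α) :
    Integrable (fun y : E6 => (1 + ‖y‖ ^ 2) ^ (-α)) := by
  have h6 : (Module.finrank ℝ E6 : ℝ) < 2 * α := by
    rw [finrank_euclideanSpace]; simp; linarith
  have := integrable_rpow_neg_one_add_norm_sq (E := E6) (μ := volume) h6
  have heq : -(2 * α) / 2 = -α := by ring
  simpa [heq] using this

private lemma aux_cont {α : ℝ} (a : E6) :
    Continuous (fun y : E6 => (1 + ‖y - a‖ ^ 2) ^ (-α)) := by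
  apply Continuous.rpow_const
  · continuity
  · intro y; left; positivity

private lemma aux_trans_integrable {α : ℝ} (hα : 3 < α) (a : E6) :
    Integrable (fun y : E6 => (1 + ‖y - a‖ ^ 2) ^ (-α)) :=
  (aux_integrable hα).comp_sub_right a

private lemma aux_trans_integral {α : ℝ} (a : E6) :
    (∫ y : E6, (1 + ‖y - a‖ ^ 2) ^ (-α)) = ∫ y : E6, (1 + ‖y‖ ^ 2) ^ (-α) :=
  integral_sub_right_eq_self (fun y : E6 => (1 + ‖y‖ ^ 2) ^ (-α)) a




private lemma rpow_neg_two_eq {x : ℝ} (hx : 0 ≤ x) : x ^ (-(2:ℝ)) = (x ^ 2)⁻¹ := by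
  rw [Real.rpow_neg hx, show ((2:ℝ)) = ((2:ℕ):ℝ) by norm_num, Real.rpow_natCast]

private lemma rpow_neg_four_eq {x : ℝ} (hx : 0 ≤ x) : x ^ (-(4:ℝ)) = (x ^ 4)⁻¹ := by
  rw [Real.rpow_neg hx, show ((4:ℝ)) = ((4:ℕ):ℝ) by norm_num, Real.rpow_natCast]

private lemma aux_pointwise {α d : ℝ} (hα : 3 < α) (hd : 2 ≤ d) (a b : E6)
    (hab : ‖a - b‖ = d) (y : E6) :
    (1 + ‖y - a‖ ^ 2) ^ (-α) / (1 + ‖y - b‖ ^ 2) ^ 2 ≤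
      16 * d ^ (-(4:ℝ)) * ((1 + ‖y - a‖ ^ 2) ^ (-α) + (1 + ‖y - b‖ ^ 2) ^ (-α)) := by
  have hd0 : (0:ℝ) < d := by linarith
  set A : ℝ := 1 + ‖y - a‖ ^ 2 with hAdef
  set B : ℝ := 1 + ‖y - b‖ ^ 2 with hBdef
  have hA : (0:ℝ) < A := by positivity
  have hB : (0:ℝ) < B := by positivity
  have hsum : d ≤ ‖y - a‖ + ‖y - b‖ := by
    calc d = ‖a - b‖ := hab.symm
    _ = ‖(a - y) + (y - b)‖ := by abel_nf
    _ ≤ ‖a - y‖ + ‖y - b‖ := norm_add_le _ _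
    _ = ‖y - a‖ + ‖y - b‖ := by rw [norm_sub_rev]
  have hd4 : d ^ (-(4:ℝ)) = (d ^ 4)⁻¹ := rpow_neg_four_eq hd0.le
  have hd4pos : (0:ℝ) < d ^ 4 := by positivity
  have hAn : (0:ℝ) ≤ A ^ (-α) := Real.rpow_nonneg hA.le _
  have hBn : (0:ℝ) ≤ B ^ (-α) := Real.rpow_nonneg hB.le _
  rcases le_total (‖y - a‖) (‖y - b‖) with h | h
  · -- ‖y-b‖ large
    have hb2 : d / 2 ≤ ‖y - b‖ := by linarith
    have hBd : d ^ 2 / 4 ≤ B := by nlinarith [norm_nonneg (y - b)]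
    have h1 : (B ^ 2)⁻¹ ≤ 16 * d ^ (-(4:ℝ)) := by
      rw [hd4]
      rw [inv_le_iff_one_le_mul₀ (by positivity)]
      have hB2 : d ^ 4 / 16 ≤ B ^ 2 := by nlinarith
      calc (1:ℝ) = 16 * (d ^ 4)⁻¹ * (d ^ 4 / 16) := by field_simp
      _ ≤ 16 * (d ^ 4)⁻¹ * B ^ 2 := mul_le_mul_of_nonneg_left hB2 (by positivity)
    calc A ^ (-α) / B ^ 2 = A ^ (-α) * (B ^ 2)⁻¹ := div_eq_mul_inv _ _
    _ ≤ A ^ (-α) * (16 * d ^ (-(4:ℝ))) := mul_le_mul_of_nonneg_left h1 hAn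
    _ ≤ 16 * d ^ (-(4:ℝ)) * (A ^ (-α) + B ^ (-α)) := by
        have : (0:ℝ) ≤ d ^ (-(4:ℝ)) := Real.rpow_nonneg hd0.le _
        nlinarith
  · -- ‖y-a‖ large
    have ha2 : d / 2 ≤ ‖y - a‖ := by linarith
    have hAd : d ^ 2 / 4 ≤ A := by nlinarith [norm_nonneg (y - a)]
    have hBA : B ≤ A := by
      have : ‖y - b‖ ^ 2 ≤ ‖y - a‖ ^ 2 := by nlinarith [norm_nonneg (y - b)]
      simp only [hAdef, hBdef]; linarith
    have hsplit : A ^ (-α) = A ^ (-(α - 2)) * A ^ (-(2:ℝ)) := by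
      rw [← Real.rpow_add hA]; ring_nf
    have h2 : A ^ (-(2:ℝ)) ≤ 16 * d ^ (-(4:ℝ)) := by
      rw [rpow_neg_two_eq hA.le, hd4, inv_le_iff_one_le_mul₀ (by positivity)]
      have hA2 : d ^ 4 / 16 ≤ A ^ 2 := by nlinarith
      calc (1:ℝ) = 16 * (d ^ 4)⁻¹ * (d ^ 4 / 16) := by field_simp
      _ ≤ 16 * (d ^ 4)⁻¹ * A ^ 2 := mul_le_mul_of_nonneg_left hA2 (by positivity)
    have h3 : A ^ (-(α - 2)) ≤ B ^ (-(α - 2)) :=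
      Real.rpow_le_rpow_of_nonpos hB hBA (by linarith)
    have hmerge : B ^ (-(α - 2)) * (B ^ 2)⁻¹ = B ^ (-α) := by
      rw [← rpow_neg_two_eq hB.le, ← Real.rpow_add hB]; ring_nf
    have hP : (0:ℝ) ≤ A ^ (-(α - 2)) := Real.rpow_nonneg hA.le _
    have hR : (0:ℝ) ≤ (B ^ 2)⁻¹ := by positivity
    calc A ^ (-α) / B ^ 2 = A ^ (-(α - 2)) * A ^ (-(2:ℝ)) * (B ^ 2)⁻¹ := by
          rw [← hsplit, div_eq_mul_inv]
    _ ≤ B ^ (-(α - 2)) * (16 * d ^ (-(4:ℝ))) * (B ^ 2)⁻¹ := by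
          apply mul_le_mul_of_nonneg_right _ hR
          exact mul_le_mul h3 h2 (Real.rpow_nonneg hA.le _) (Real.rpow_nonneg hB.le _)
    _ = 16 * d ^ (-(4:ℝ)) * (B ^ (-(α - 2)) * (B ^ 2)⁻¹) := by ring
    _ = 16 * d ^ (-(4:ℝ)) * B ^ (-α) := by rw [hmerge]
    _ ≤ 16 * d ^ (-(4:ℝ)) * (A ^ (-α) + B ^ (-α)) := by
          have : (0:ℝ) ≤ d ^ (-(4:ℝ)) := Real.rpow_nonneg hd0.le _
          nlinarith

/-- **Two-sided interaction integral estimate on `ℝ⁶`.**  For `α > 3` there are constants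
`c₁, c₂ > 0` such that for all `λ > 0` and `z₁, zᵢ ∈ ℝ⁶` with `λ|z₁ - zᵢ| ≥ 2`,
`c₁ (λ|z₁-zᵢ|)^(-4) ≤ ∫ (1+|y-λz₁|²)^(-α) (1+|y-λzᵢ|²)^(-2) dy ≤ c₂ (λ|z₁-zᵢ|)^(-4)`. -/
theorem interaction_integral_two_sided (α : ℝ) (hα : 3 < α) :
    ∃ c₁ c₂ : ℝ, 0 < c₁ ∧ 0 < c₂ ∧
      ∀ (l : ℝ), 0 < l → ∀ z₁ zi : EuclideanSpace ℝ (Fin 6), 2 ≤ l * ‖z₁ - zi‖ →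
        c₁ * (l * ‖z₁ - zi‖) ^ (-(4 : ℝ)) ≤
          (∫ y : EuclideanSpace ℝ (Fin 6),
            (1 + ‖y - l • z₁‖ ^ 2) ^ (-α) / (1 + ‖y - l • zi‖ ^ 2) ^ 2) ∧
        (∫ y : EuclideanSpace ℝ (Fin 6),
            (1 + ‖y - l • z₁‖ ^ 2) ^ (-α) / (1 + ‖y - l • zi‖ ^ 2) ^ 2) ≤
          c₂ * (l * ‖z₁ - zi‖) ^ (-(4 : ℝ)) := by
  set C : ℝ := ∫ y : E6, (1 + ‖y‖ ^ 2) ^ (-α) with hCdef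
  have hC0 : 0 ≤ C := integral_nonneg fun y => Real.rpow_nonneg (by positivity) _
  have hvol : (0:ℝ) < (volume (Metric.ball (0:E6) 1)).toReal :=
    ENNReal.toReal_pos (Metric.measure_ball_pos volume 0 one_pos).ne' measure_ball_lt_top.ne
  have h2α : (0:ℝ) < (2:ℝ) ^ (-α) := Real.rpow_pos_of_pos two_pos _
  refine ⟨4/25 * 2 ^ (-α) * (volume (Metric.ball (0:E6) 1)).toReal, 32 * C + 1,
    by positivity, by positivity, ?_⟩
  intro l hl z₁ zi hsep
  set a : E6 := l • z₁ with hadef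
  set b : E6 := l • zi with hbdef
  set d : ℝ := l * ‖z₁ - zi‖ with hddef
  have hab : ‖a - b‖ = d := by
    rw [hadef, hbdef, ← smul_sub, norm_smul, Real.norm_eq_abs, abs_of_pos hl]
  have hd2 : (2:ℝ) ≤ d := hsep
  have hd0 : (0:ℝ) < d := by linarith
  have hdn : (0:ℝ) ≤ d ^ (-(4:ℝ)) := Real.rpow_nonneg hd0.le _
  set f : E6 → ℝ := fun y => (1 + ‖y - a‖ ^ 2) ^ (-α) / (1 + ‖y - b‖ ^ 2) ^ 2 with hfdef
  have hfnn : ∀ y, 0 ≤ f y := fun y => by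
    have : (0:ℝ) ≤ (1 + ‖y - a‖ ^ 2) ^ (-α) := Real.rpow_nonneg (by positivity) _
    positivity
  have hfcont : Continuous f := by
    apply (aux_cont (α := α) a).div
    · continuity
    · intro y; positivity
  have hga : Integrable (fun y : E6 => (1 + ‖y - a‖ ^ 2) ^ (-α)) := aux_trans_integrable hα a
  have hgb : Integrable (fun y : E6 => (1 + ‖y - b‖ ^ 2) ^ (-α)) := aux_trans_integrable hα b
  have hg : Integrable (fun y : E6 =>
      16 * d ^ (-(4:ℝ)) * ((1 + ‖y - a‖ ^ 2) ^ (-α) + (1 + ‖y - b‖ ^ 2) ^ (-α))) :=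
    (hga.add hgb).const_mul _
  have hbound : ∀ y, f y ≤
      16 * d ^ (-(4:ℝ)) * ((1 + ‖y - a‖ ^ 2) ^ (-α) + (1 + ‖y - b‖ ^ 2) ^ (-α)) :=
    fun y => aux_pointwise hα hd2 a b hab y
  have hfint : Integrable f := by
    refine hg.mono' hfcont.aestronglyMeasurable (Filter.Eventually.of_forall fun y => ?_)
    rw [Real.norm_eq_abs, abs_of_nonneg (hfnn y)]
    exact hbound y
  constructor
  · -- lower bound
    have key : ∀ y ∈ Metric.ball a 1, 4/25 * 2 ^ (-α) * d ^ (-(4:ℝ)) ≤ f y := by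
      intro y hy
      have hya : ‖y - a‖ < 1 := by rwa [Metric.mem_ball, dist_eq_norm] at hy
      have h1 : (2:ℝ) ^ (-α) ≤ (1 + ‖y - a‖ ^ 2) ^ (-α) := by
        apply Real.rpow_le_rpow_of_nonpos (by positivity) (by nlinarith [norm_nonneg (y - a)])
          (by linarith)
      have hyb : ‖y - b‖ ≤ 3/2 * d := by
        calc ‖y - b‖ = ‖(y - a) + (a - b)‖ := by abel_nf
        _ ≤ ‖y - a‖ + ‖a - b‖ := norm_add_le _ _
        _ ≤ 1 + d := by rw [hab]; linarith
        _ ≤ 3/2 * d := by linarith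
      have h5 : 1 + ‖y - b‖ ^ 2 ≤ 5/2 * d ^ 2 := by nlinarith [norm_nonneg (y - b)]
      have hBle : (1 + ‖y - b‖ ^ 2) ^ 2 ≤ 25/4 * d ^ 4 := by
        calc (1 + ‖y - b‖ ^ 2) ^ 2 ≤ (5/2 * d ^ 2) ^ 2 := by
              apply pow_le_pow_left₀ (by positivity) h5
        _ = 25/4 * d ^ 4 := by ring
      have h2 : 4/25 * d ^ (-(4:ℝ)) ≤ ((1 + ‖y - b‖ ^ 2) ^ 2)⁻¹ := by
        rw [rpow_neg_four_eq hd0.le]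
        calc 4/25 * (d ^ 4)⁻¹ = (25/4 * d ^ 4)⁻¹ := by rw [mul_inv]; ring
        _ ≤ ((1 + ‖y - b‖ ^ 2) ^ 2)⁻¹ := by
            apply inv_anti₀ (by positivity) hBle
      calc 4/25 * 2 ^ (-α) * d ^ (-(4:ℝ)) = 2 ^ (-α) * (4/25 * d ^ (-(4:ℝ))) := by ring
      _ ≤ (1 + ‖y - a‖ ^ 2) ^ (-α) * ((1 + ‖y - b‖ ^ 2) ^ 2)⁻¹ :=
          mul_le_mul h1 h2 (by positivity) (Real.rpow_nonneg (by positivity) _)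
      _ = f y := (div_eq_mul_inv _ _).symm
    calc 4/25 * 2 ^ (-α) * (volume (Metric.ball (0:E6) 1)).toReal * d ^ (-(4:ℝ))
        = (volume (Metric.ball a 1)).toReal • (4/25 * 2 ^ (-α) * d ^ (-(4:ℝ))) := by
          rw [show volume (Metric.ball a 1) = volume (Metric.ball (0:E6) 1) from
            Measure.addHaar_ball_center volume a 1, smul_eq_mul]; ring
    _ = ∫ _ in Metric.ball a 1, 4/25 * 2 ^ (-α) * d ^ (-(4:ℝ)) := (setIntegral_const _).symm
    _ ≤ ∫ y in Metric.ball a 1, f y := by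
          apply setIntegral_mono_on
            (integrableOn_const measure_ball_lt_top.ne) hfint.integrableOn
            measurableSet_ball key
    _ ≤ ∫ y, f y := setIntegral_le_integral hfint (Filter.Eventually.of_forall hfnn)
  · -- upper bound
    calc (∫ y, f y)
        ≤ ∫ y : E6, 16 * d ^ (-(4:ℝ)) *
            ((1 + ‖y - a‖ ^ 2) ^ (-α) + (1 + ‖y - b‖ ^ 2) ^ (-α)) :=
          integral_mono hfint hg hbound
    _ = 16 * d ^ (-(4:ℝ)) * (C + C) := by
          rw [integral_const_mul, integral_add hga hgb, aux_trans_integral, aux_trans_integral]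
    _ ≤ (32 * C + 1) * d ^ (-(4:ℝ)) := by nlinarith
end
end
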